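/- arXiv:1501.04724 — 7 statements merged into one kernel-verified Lean document; each statement's English description precedes it below -/
import Mathlib

section
/- Let (U_i) be a collection of pairwise disjoint open sets in ℝ^d such that each U_i contains a ball of radius c₁r and is contained in a ball of radius c₂r (with c₁, c₂, r > 0). Then any ball of radius r intersects at most (1+2c₂)^d c₁^{-d} of the closures of the sets U_i. -/
open MeasureTheory Metric Set
open scoped ENNReal

theorem stmt_0 {d : ℕ} {ι : Type*} (U : ι → Set (EuclideanSpace ℝ (Fin d)))
    (c₁ c₂ r : ℝ) (hc₁ : 0 < c₁) (hc₂ : 0 < c₂) (hr : 0 < r)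
    (hopen : ∀ i, IsOpen (U i))
    (hdisj : Pairwise (Function.onFun Disjoint U))
    (hin : ∀ i, ∃ y, ball y (c₁ * r) ⊆ U i)
    (hout : ∀ i, ∃ z, U i ⊆ ball z (c₂ * r))
    (x : EuclideanSpace ℝ (Fin d)) :
    {i | (closure (U i) ∩ ball x r).Nonempty}.Finite ∧
      ((Nat.card {i | (closure (U i) ∩ ball x r).Nonempty}) : ℝ)
        ≤ (1 + 2 * c₂) ^ d / c₁ ^ d := by
  classical
  set S := {i | (closure (U i) ∩ ball x r).Nonempty} with hS
  choose y hy using hin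
  choose z hz using hout
  set a : ℝ := (c₁ * r) ^ d with ha
  set b : ℝ := ((1 + 2 * c₂) * r) ^ d with hb
  have ha0 : 0 < a := pow_pos (mul_pos hc₁ hr) d
  have hb0 : 0 < b := pow_pos (mul_pos (by linarith) hr) d
  -- small balls for indices in S are contained in the big ball
  have hbig : ∀ i ∈ S, ball (y i) (c₁ * r) ⊆ ball x ((1 + 2 * c₂) * r) := by
    intro i hi
    obtain ⟨p, hp, hpx⟩ := hi
    have hpz : dist p (z i) ≤ c₂ * r := by
      have : closure (U i) ⊆ closedBall (z i) (c₂ * r) := by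
        apply closure_minimal ((hz i).trans ball_subset_closedBall) isClosed_closedBall
      exact this hp
    intro w hw
    have hwU : w ∈ U i := hy i hw
    have hwz : dist w (z i) < c₂ * r := hz i hwU
    have hpx' : dist p x < r := hpx
    have htri := dist_triangle4 w (z i) p x
    have hcomm : dist (z i) p = dist p (z i) := dist_comm _ _
    have : dist w x < (1 + 2 * c₂) * r := by
      rw [hcomm] at htri
      have : dist w x ≤ dist w (z i) + dist p (z i) + dist p x := htri
      nlinarith [hwz, hpz, hpx']
    simpa [mem_ball] using this
  -- key finset inequality
  have key : ∀ t : Finset ι, ↑t ⊆ S → (t.card : ℝ) * a ≤ b := by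
    intro t ht
    set μ : Measure (EuclideanSpace ℝ (Fin d)) := volume
    have hfr : Module.finrank ℝ (EuclideanSpace ℝ (Fin d)) = d := finrank_euclideanSpace_fin
    set B := μ (ball (0 : EuclideanSpace ℝ (Fin d)) 1) with hB
    have hBpos : B ≠ 0 := (measure_ball_pos μ 0 one_pos).ne'
    have hBtop : B ≠ ⊤ := measure_ball_lt_top.ne
    have hdisjballs : (↑t : Set ι).PairwiseDisjoint fun i => ball (y i) (c₁ * r) := by
      intro i _ j _ hij
      exact Disjoint.mono (hy i) (hy j) (hdisj hij)
    have hsum : μ (⋃ i ∈ t, ball (y i) (c₁ * r)) = ∑ i ∈ t, μ (ball (y i) (c₁ * r)) :=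
      measure_biUnion_finset hdisjballs (fun i _ => measurableSet_ball)
    have hsub : (⋃ i ∈ t, ball (y i) (c₁ * r)) ⊆ ball x ((1 + 2 * c₂) * r) := by
      simp only [iUnion_subset_iff]
      exact fun i hi => hbig i (ht hi)
    have hball : ∀ w : EuclideanSpace ℝ (Fin d), μ (ball w (c₁ * r)) = ENNReal.ofReal a * B := by
      intro w
      rw [Measure.addHaar_ball_of_pos μ w (mul_pos hc₁ hr), hfr, ha]
    have hballbig : μ (ball x ((1 + 2 * c₂) * r)) = ENNReal.ofReal b * B := by
      rw [Measure.addHaar_ball_of_pos μ x (mul_pos (by linarith : (0:ℝ) < 1 + 2 * c₂) hr), hfr, hb]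
    have h1 : (t.card : ENNReal) * ENNReal.ofReal a * B ≤ ENNReal.ofReal b * B := by
      calc ((t.card : ENNReal) * ENNReal.ofReal a * B)
          = ∑ i ∈ t, μ (ball (y i) (c₁ * r)) := by
            simp [hball, Finset.sum_const, mul_assoc]
        _ = μ (⋃ i ∈ t, ball (y i) (c₁ * r)) := hsum.symm
        _ ≤ μ (ball x ((1 + 2 * c₂) * r)) := measure_mono hsub
        _ = ENNReal.ofReal b * B := hballbig
    have h2 : (t.card : ENNReal) * ENNReal.ofReal a ≤ ENNReal.ofReal b :=
      (ENNReal.mul_le_mul_iff_left hBpos hBtop).mp h1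
    have h3 : ENNReal.ofReal ((t.card : ℝ) * a) ≤ ENNReal.ofReal b := by
      rwa [ENNReal.ofReal_mul (Nat.cast_nonneg _), ENNReal.ofReal_natCast]
    exact (ENNReal.ofReal_le_ofReal_iff hb0.le).mp h3
  -- finiteness
  have hfin : S.Finite := by
    by_contra hinf
    have hinf' : S.Infinite := hinf
    obtain ⟨t, hts, htcard⟩ := hinf'.exists_subset_card_eq
      (⌈b / a⌉₊ + 1)
    have := key t hts
    have hle : (t.card : ℝ) ≤ b / a := (le_div_iff₀ ha0).mpr this
    rw [htcard] at hle
    have : (⌈b / a⌉₊ : ℝ) + 1 ≤ b / a := by push_cast at hle; linarith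
    have h4 : b / a ≤ ⌈b / a⌉₊ := Nat.le_ceil _
    linarith
  refine ⟨hfin, ?_⟩
  have hcard : (Nat.card S : ℝ) * a ≤ b := by
    have := key hfin.toFinset (by simp)
    rwa [← Set.ncard_eq_toFinset_card S hfin, ← Nat.card_coe_set_eq] at this
  have : (Nat.card S : ℝ) ≤ b / a := (le_div_iff₀ ha0).mpr hcard
  calc (Nat.card S : ℝ) ≤ b / a := this
    _ = (1 + 2 * c₂) ^ d / c₁ ^ d := by
        rw [ha, hb, mul_pow, mul_pow]
        rw [div_eq_div_iff (by positivity) (by positivity)]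
        ring
end

section
/- Let E ⊂ ℝ^d be the attractor of an iterated function system of contracting similitudes satisfying the open set condition, with similarity dimension s (i.e. Σ λ_i^s = 1). Then there exist constants 0 < c ≤ C < ∞ such that c·r^{d−s} ≤ Vol(E + B(0,r)) ≤ C·r^{d−s} for all 0 < r < 1. In particular E has positive and finite s-dimensional upper and lower Minkowski contents. -/
open MeasureTheory Metric Set Pointwise

local notation "Eu" d => EuclideanSpace ℝ (Fin d)




lemma isom_linear {d : ℕ} (f : (Eu d) → (Eu d))
    (hf : ∀ x y, dist (f x) (f y) = dist x y) (h0 : f 0 = 0) :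
    ∃ L : (Eu d) ≃ₗᵢ[ℝ] (Eu d), ∀ x, f x = L x := by
  rcases Nat.eq_zero_or_pos d with hd | hd
  · subst hd
    haveI : Subsingleton (Eu 0) := by
      rw [← Module.finrank_zero_iff (R := ℝ)]
      simp [finrank_euclideanSpace_fin]
    exact ⟨LinearIsometryEquiv.refl ℝ _, fun x => Subsingleton.elim _ _⟩
  · haveI : Nonempty (Fin d) := ⟨⟨0, hd⟩⟩
    have hnorm : ∀ x, ‖f x‖ = ‖x‖ := by
      intro x
      have := hf x 0
      rwa [h0, dist_zero_right, dist_zero_right] at this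
    have hinner : ∀ x y, (inner ℝ (f x) (f y) : ℝ) = inner ℝ x y := by
      intro x y
      have h1 : ‖f x - f y‖ = ‖x - y‖ := by
        simpa [dist_eq_norm] using hf x y
      have e1 := norm_sub_sq_real (f x) (f y)
      have e2 := norm_sub_sq_real x y
      rw [h1, hnorm, hnorm] at e1
      linarith
    set b := EuclideanSpace.basisFun (Fin d) ℝ with hb
    set v : Fin d → (Eu d) := fun i => f (b i) with hv
    have hvon : Orthonormal ℝ v := by
      rw [orthonormal_iff_ite]
      intro i j
      have := b.orthonormal
      rw [orthonormal_iff_ite] at this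
      simpa [hv, hinner] using this i j
    have card : Fintype.card (Fin d) = Module.finrank ℝ (Eu d) := by
      simp [finrank_euclideanSpace_fin]
    have span_top : Submodule.span ℝ (Set.range v) = ⊤ := by
      rw [← coe_basisOfOrthonormalOfCardEqFinrank hvon card]
      exact (basisOfOrthonormalOfCardEqFinrank hvon card).span_eq
    set L0 : (Eu d) →ₗ[ℝ] (Eu d) := b.toBasis.constr ℝ v with hL0
    have hconstr : ∀ x, L0 x = ∑ i, b.repr x i • v i := by
      intro x
      rw [hL0, Module.Basis.constr_apply_fintype]
      simp only [Module.Basis.equivFun_apply, OrthonormalBasis.coe_toBasis_repr_apply]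
    have key : ∀ x, f x = L0 x := by
      intro x
      have horth : ∀ i, (inner ℝ (v i) (f x - L0 x) : ℝ) = 0 := by
        intro i
        rw [inner_sub_right]
        have h1 : (inner ℝ (v i) (f x) : ℝ) = inner ℝ (b i) x := hinner _ _
        have h2 : (inner ℝ (v i) (L0 x) : ℝ) = b.repr x i := by
          rw [hconstr, inner_sum]
          have : ∀ j, (inner ℝ (v i) (b.repr x j • v j) : ℝ)
              = if i = j then b.repr x j else 0 := by
            intro j
            rw [real_inner_smul_right]
            have := (orthonormal_iff_ite.mp hvon) i j
            rw [this]
            by_cases h : i = j <;> simp [h]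
          rw [Finset.sum_congr rfl fun j _ => this j]
          simp
        rw [h1, h2, b.repr_apply_apply, sub_self]
      have hz : (inner ℝ (f x - L0 x) (f x - L0 x) : ℝ) = 0 := by
        have hmem : f x - L0 x ∈ Submodule.span ℝ (Set.range v) := by
          rw [span_top]; trivial
        refine Submodule.span_induction
          (p := fun z _ => (inner ℝ z (f x - L0 x) : ℝ) = 0) ?_ ?_ ?_ ?_ hmem
        · rintro z ⟨i, rfl⟩; exact horth i
        · simp
        · intro a c _ _ ha hc
          rw [inner_add_left, ha, hc, add_zero]
        · intro t a _ ha
          rw [real_inner_smul_left, ha, mul_zero]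
      have := inner_self_eq_zero (𝕜 := ℝ).mp hz
      rw [sub_eq_zero] at this
      exact this
    have hL0inner : ∀ x y, (inner ℝ (L0 x) (L0 y) : ℝ) = inner ℝ x y := by
      intro x y
      rw [← key, ← key]
      exact hinner x y
    exact ⟨(L0.isometryOfInner hL0inner).toLinearIsometryEquiv rfl, fun x => key x⟩

lemma sim_vol {d : ℕ} {c : ℝ} (hc : 0 < c) (f : (Eu d) → (Eu d))
    (hf : ∀ x y, dist (f x) (f y) = c * dist x y) :
    IsOpenMap f ∧ ∀ V : Set (Eu d), MeasurableSet V →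
      volume (f '' V) = ENNReal.ofReal (c ^ d) * volume V := by
  set g : (Eu d) → (Eu d) := fun x => c⁻¹ • (f x - f 0) with hgdef
  have hg : ∀ x y, dist (g x) (g y) = dist x y := by
    intro x y
    simp only [hgdef, dist_smul₀, dist_sub_right, hf x y, norm_inv, Real.norm_eq_abs,
      abs_of_pos hc]
    field_simp
  have hg0 : g 0 = 0 := by simp [hgdef]
  obtain ⟨L, hL⟩ := isom_linear g hg hg0
  have hfx : ∀ x, f x = c • L x + f 0 := by
    intro x
    have := hL x
    rw [hgdef] at this
    have h2 : f x - f 0 = c • L x := by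
      rw [← this, smul_smul, mul_inv_cancel₀ hc.ne', one_smul]
    rw [← h2]; abel
  have himg : ∀ V : Set (Eu d),
      f '' V = (fun y => y + f 0) '' (c • (⇑L '' V)) := by
    intro V
    rw [← Set.image_smul, ← Set.image_comp, ← Set.image_comp]
    exact Set.image_congr fun x _ => hfx x
  constructor
  · have hfun : f = (fun y => y + f 0) ∘ (fun y => c • y) ∘ ⇑L := by
      funext x; exact hfx x
    rw [hfun]
    exact ((Homeomorph.addRight (f 0)).isOpenMap.comp
      (isOpenMap_smul₀ hc.ne')).comp L.toHomeomorph.isOpenMap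
  · intro V hV
    rw [himg V]
    have h1 : volume ((fun y => y + f 0) '' (c • (⇑L '' V))) = volume (c • (⇑L '' V)) := by
      rw [Set.image_add_right, measure_preimage_add_right]
    rw [h1, Measure.addHaar_smul]
    have h2 : volume (⇑L '' V) = volume V := by
      have : ⇑L '' V = ⇑L.symm ⁻¹' V := by
        ext z
        simp only [Set.mem_image, Set.mem_preimage]
        constructor
        · rintro ⟨x, hx, rfl⟩; simpa using hx
        · intro hz; exact ⟨L.symm z, hz, by simp⟩
      rw [this]
      exact L.symm.measurePreserving.measure_preimage hV.nullMeasurableSet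
    rw [h2, finrank_euclideanSpace_fin, abs_of_pos (pow_pos hc d)]



namespace Stmt3Aux

variable {m : ℕ}

def lamP (lam : Fin m → ℝ) : List (Fin m) → ℝ
  | [] => 1
  | i :: w => lam i * lamP lam w

def phiW {α : Type*} (φ : Fin m → α → α) : List (Fin m) → α → α
  | [] => id
  | i :: w => φ i ∘ phiW φ w

noncomputable def TT (lam : Fin m → ℝ) : ℕ → ℝ → Finset (List (Fin m))
  | 0, _ => {[]}
  | n+1, r =>
    if 1 ≤ r then {[]}
    else Finset.univ.biUnion fun i => (TT lam n (r / lam i)).image (List.cons i)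

lemma TT_of_one_le (lam : Fin m → ℝ) {r : ℝ} (n : ℕ) (h : 1 ≤ r) :
    TT lam n r = {[]} := by
  cases n <;> simp [TT, h]

lemma TT_succ_of_lt (lam : Fin m → ℝ) {r : ℝ} (n : ℕ) (h : ¬ (1 ≤ r)) :
    TT lam (n+1) r =
      Finset.univ.biUnion fun i => (TT lam n (r / lam i)).image (List.cons i) := by
  simp [TT, h]

lemma TT_img_pairwise (lam : Fin m → ℝ) (n : ℕ) (r : ℝ) :
    Set.PairwiseDisjoint (↑(Finset.univ : Finset (Fin m)))
      (fun i => (TT lam n (r / lam i)).image (List.cons i)) := by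
  intro i _ j _ hij
  rw [Function.onFun, Finset.disjoint_left]
  rintro a ha hb
  simp only [Finset.mem_image] at ha hb
  obtain ⟨w1, _, rfl⟩ := ha
  obtain ⟨w2, _, h⟩ := hb
  injection h with h1 _
  exact hij h1.symm

variable {lam : Fin m → ℝ} {t u : ℝ}

lemma lamP_pos (hlam : ∀ i, lam i ∈ Set.Ioo (0:ℝ) 1) (w : List (Fin m)) :
    0 < lamP lam w := by
  induction w with
  | nil => norm_num [lamP]
  | cons i w ih => exact mul_pos (hlam i).1 ih

lemma step_hyp (hlam : ∀ i, lam i ∈ Set.Ioo (0:ℝ) 1)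
    (ht : ∀ i, lam i ≤ t) (ht0 : 0 < t) (ht1 : t < 1) {n : ℕ} {r : ℝ} (i : Fin m)
    (hn : t ^ (n+1) ≤ r) :
    t ^ n ≤ min (r / lam i) 1 := by
  rw [le_min_iff]
  refine ⟨?_, pow_le_one₀ ht0.le ht1.le⟩
  rw [le_div_iff₀ (hlam i).1]
  calc t ^ n * lam i ≤ t ^ n * t := by
        have : (0:ℝ) ≤ t ^ n := (pow_pos ht0 n).le
        nlinarith [ht i]
    _ = t ^ (n+1) := by ring
    _ ≤ r := hn

lemma TT_bounds (hlam : ∀ i, lam i ∈ Set.Ioo (0:ℝ) 1)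
    (ht : ∀ i, lam i ≤ t) (ht0 : 0 < t) (ht1 : t < 1)
    (hu : ∀ i, u ≤ lam i) (hu0 : 0 < u) (hu1 : u < 1) :
    ∀ n : ℕ, ∀ r : ℝ, 0 < r → t ^ n ≤ min r 1 →
      ∀ w ∈ TT lam n r, u * min r 1 < lamP lam w ∧ lamP lam w ≤ min r 1 := by
  intro n
  induction n with
  | zero =>
    intro r hr hn w hw
    have h1 : 1 ≤ r := by simpa using (le_min_iff.mp hn).1
    rw [TT_of_one_le lam 0 h1] at hw
    simp at hw
    subst hw
    rw [min_eq_right h1]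
    simp [lamP, hu1]
  | succ n ih =>
    intro r hr hn w hw
    by_cases h1 : 1 ≤ r
    · rw [TT_of_one_le lam _ h1] at hw
      simp at hw
      subst hw
      rw [min_eq_right h1]
      simp [lamP, hu1]
    · push_neg at h1
      rw [min_eq_left h1.le] at hn ⊢
      rw [TT_succ_of_lt lam n (not_le.mpr h1)] at hw
      simp only [Finset.mem_biUnion, Finset.mem_univ, Finset.mem_image, true_and] at hw
      obtain ⟨i, w', hw', rfl⟩ := hw
      have hli := hlam i
      by_cases h2 : 1 ≤ r / lam i
      · rw [TT_of_one_le lam n h2] at hw'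
        simp at hw'
        subst hw'
        have hlr : lam i ≤ r := by rwa [one_le_div hli.1] at h2
        constructor
        · have h3 : u * r < u := by nlinarith
          calc u * r < u := h3
            _ ≤ lam i := hu i
            _ = lamP lam [i] := by simp [lamP]
        · simpa [lamP] using hlr
      · push_neg at h2
        have hrdiv : 0 < r / lam i := div_pos hr hli.1
        have htn : t ^ n ≤ min (r / lam i) 1 := step_hyp hlam ht ht0 ht1 i hn
        obtain ⟨hlow, hhigh⟩ := ih (r / lam i) hrdiv htn w' hw'
        rw [min_eq_left h2.le] at hlow hhigh
        constructor
        · have heq : u * r = lam i * (u * (r / lam i)) := by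
            rw [mul_comm (lam i), mul_assoc, div_mul_cancel₀ _ (ne_of_gt hli.1)]
          rw [heq]
          show _ < lamP lam (i :: w')
          rw [lamP]
          exact mul_lt_mul_of_pos_left hlow hli.1
        · show lamP lam (i :: w') ≤ r
          rw [lamP]
          calc lam i * lamP lam w' ≤ lam i * (r / lam i) :=
                mul_le_mul_of_nonneg_left hhigh hli.1.le
            _ = r := mul_div_cancel₀ r (ne_of_gt hli.1)

lemma TT_sum {s : ℝ} (hlam : ∀ i, lam i ∈ Set.Ioo (0:ℝ) 1)
    (hsum : ∑ i, lam i ^ s = 1)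
    (ht : ∀ i, lam i ≤ t) (ht0 : 0 < t) (ht1 : t < 1) :
    ∀ n : ℕ, ∀ r : ℝ, 0 < r → t ^ n ≤ min r 1 →
      ∑ w ∈ TT lam n r, lamP lam w ^ s = 1 := by
  intro n
  induction n with
  | zero =>
    intro r hr hn
    have h1 : 1 ≤ r := by simpa using (le_min_iff.mp hn).1
    rw [TT_of_one_le lam 0 h1]
    simp [lamP]
  | succ n ih =>
    intro r hr hn
    by_cases h1 : 1 ≤ r
    · rw [TT_of_one_le lam _ h1]
      simp [lamP]
    · push_neg at h1
      rw [min_eq_left h1.le] at hn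
      rw [TT_succ_of_lt lam n (not_le.mpr h1),
        Finset.sum_biUnion (TT_img_pairwise lam n r)]
      have hterm : ∀ i : Fin m,
          ∑ w ∈ (TT lam n (r / lam i)).image (List.cons i), lamP lam w ^ s
            = lam i ^ s := by
        intro i
        have hli := hlam i
        rw [Finset.sum_image (fun a _ b _ h => by injection h)]
        have hrdiv : 0 < r / lam i := div_pos hr hli.1
        have hihsum := ih (r / lam i) hrdiv (step_hyp hlam ht ht0 ht1 i hn)
        calc ∑ w' ∈ TT lam n (r / lam i), lamP lam (i :: w') ^ s
            = ∑ w' ∈ TT lam n (r / lam i), lam i ^ s * lamP lam w' ^ s := by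
              refine Finset.sum_congr rfl fun w' _ => ?_
              rw [show lamP lam (i :: w') = lam i * lamP lam w' from rfl,
                Real.mul_rpow hli.1.le (lamP_pos hlam w').le]
          _ = lam i ^ s * ∑ w' ∈ TT lam n (r / lam i), lamP lam w' ^ s := by
              rw [Finset.mul_sum]
          _ = lam i ^ s := by rw [hihsum, mul_one]
      rw [Finset.sum_congr rfl fun i _ => hterm i]
      exact hsum


section phi

variable {α : Type*} {φ : Fin m → α → α}

lemma phiW_cons (i : Fin m) (w : List (Fin m)) (x : α) :
    phiW φ (i :: w) x = φ i (phiW φ w x) := rfl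

lemma phiW_image_comp (i : Fin m) (w : List (Fin m)) (V : Set α) :
    phiW φ (i :: w) '' V = φ i '' (phiW φ w '' V) := Set.image_comp _ _ _

lemma phiW_image_subset {A : Set α} (hsub : ∀ i, φ i '' A ⊆ A) :
    ∀ w : List (Fin m), phiW φ w '' A ⊆ A := by
  intro w
  induction w with
  | nil => simp [phiW]
  | cons i w ih =>
    rw [phiW_image_comp]
    exact (Set.image_mono ih).trans (hsub i)

lemma phiW_dist {X : Type*} [PseudoMetricSpace X] {ψ : Fin m → X → X}
    (hsim : ∀ i x y, dist (ψ i x) (ψ i y) = lam i * dist x y) :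
    ∀ (w : List (Fin m)) (x y : X),
      dist (phiW ψ w x) (phiW ψ w y) = lamP lam w * dist x y := by
  intro w
  induction w with
  | nil => simp [phiW, lamP]
  | cons i w ih =>
    intro x y
    rw [show phiW ψ (i :: w) x = ψ i (phiW ψ w x) from rfl,
      show phiW ψ (i :: w) y = ψ i (phiW ψ w y) from rfl, hsim, ih,
      show lamP lam (i :: w) = lam i * lamP lam w from rfl, mul_assoc]

lemma TT_cover (hlam : ∀ i, lam i ∈ Set.Ioo (0:ℝ) 1)
    (ht : ∀ i, lam i ≤ t) (ht0 : 0 < t) (ht1 : t < 1)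
    {A : Set α} (hAsub : A ⊆ ⋃ i, φ i '' A) :
    ∀ n : ℕ, ∀ r : ℝ, 0 < r → t ^ n ≤ min r 1 →
      A ⊆ ⋃ w ∈ TT lam n r, phiW φ w '' A := by
  intro n
  induction n with
  | zero =>
    intro r hr hn
    have h1 : 1 ≤ r := by simpa using (le_min_iff.mp hn).1
    rw [TT_of_one_le lam 0 h1]
    simp [phiW]
  | succ n ih =>
    intro r hr hn
    by_cases h1 : 1 ≤ r
    · rw [TT_of_one_le lam _ h1]
      simp [phiW]
    · push_neg at h1
      rw [min_eq_left h1.le] at hn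
      rw [TT_succ_of_lt lam n (not_le.mpr h1)]
      intro x hx
      obtain ⟨i, a, ha, rfl⟩ := by
        simpa only [Set.mem_iUnion, Set.mem_image] using hAsub hx
      have hIH := ih (r / lam i) (div_pos hr (hlam i).1) (step_hyp hlam ht ht0 ht1 i hn) ha
      simp only [Set.mem_iUnion, Set.mem_image] at hIH
      obtain ⟨w', hw', a', ha', rfl⟩ := hIH
      simp only [Set.mem_iUnion, Set.mem_image, Finset.mem_biUnion, Finset.mem_univ,
        Finset.mem_image, true_and]
      exact ⟨i :: w', ⟨i, w', hw', rfl⟩, a', ha', rfl⟩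

lemma TT_disj (hlam : ∀ i, lam i ∈ Set.Ioo (0:ℝ) 1)
    (ht : ∀ i, lam i ≤ t) (ht0 : 0 < t) (ht1 : t < 1)
    (hinj : ∀ i, Function.Injective (φ i))
    {U : Set α} (hUsub : ∀ i, φ i '' U ⊆ U)
    (hUdisj : Pairwise (Function.onFun Disjoint (fun i => φ i '' U))) :
    ∀ n : ℕ, ∀ r : ℝ, 0 < r → t ^ n ≤ min r 1 →
      ∀ w1 ∈ TT lam n r, ∀ w2 ∈ TT lam n r, w1 ≠ w2 →
        Disjoint (phiW φ w1 '' U) (phiW φ w2 '' U) := by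
  intro n
  induction n with
  | zero =>
    intro r hr hn w1 hw1 w2 hw2 hne
    have h1 : 1 ≤ r := by simpa using (le_min_iff.mp hn).1
    rw [TT_of_one_le lam 0 h1] at hw1 hw2
    simp at hw1 hw2
    exact absurd (hw1.trans hw2.symm) hne
  | succ n ih =>
    intro r hr hn w1 hw1 w2 hw2 hne
    by_cases h1 : 1 ≤ r
    · rw [TT_of_one_le lam _ h1] at hw1 hw2
      simp at hw1 hw2
      exact absurd (hw1.trans hw2.symm) hne
    · push_neg at h1
      rw [min_eq_left h1.le] at hn
      rw [TT_succ_of_lt lam n (not_le.mpr h1)] at hw1 hw2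
      simp only [Finset.mem_biUnion, Finset.mem_univ, Finset.mem_image, true_and] at hw1 hw2
      obtain ⟨i, w1', hw1', rfl⟩ := hw1
      obtain ⟨j, w2', hw2', rfl⟩ := hw2
      by_cases hij : i = j
      · subst hij
        have hne' : w1' ≠ w2' := fun h => hne (by rw [h])
        have hd := ih (r / lam i) (div_pos hr (hlam i).1)
          (step_hyp hlam ht ht0 ht1 i hn) w1' hw1' w2' hw2' hne'
        rw [phiW_image_comp, phiW_image_comp]
        exact (Set.disjoint_image_iff (hinj i)).mpr hd
      · have hsub1 : phiW φ (i :: w1') '' U ⊆ φ i '' U := by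
          rw [phiW_image_comp]
          exact Set.image_mono (phiW_image_subset hUsub w1')
        have hsub2 : phiW φ (j :: w2') '' U ⊆ φ j '' U := by
          rw [phiW_image_comp]
          exact Set.image_mono (phiW_image_subset hUsub w2')
        exact (hUdisj hij).mono hsub1 hsub2

end phi

end Stmt3Aux

open Stmt3Aux

theorem stmt_3 {d m : ℕ}
    (φ : Fin m → EuclideanSpace ℝ (Fin d) → EuclideanSpace ℝ (Fin d))
    (lam : Fin m → ℝ) (hlam : ∀ i, lam i ∈ Set.Ioo (0 : ℝ) 1)
    (hsim : ∀ i x y, dist (φ i x) (φ i y) = lam i * dist x y)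
    (s : ℝ) (hs : 0 < s) (hsum : ∑ i, lam i ^ s = 1)
    (U : Set (EuclideanSpace ℝ (Fin d))) (hUopen : IsOpen U)
    (hUbdd : Bornology.IsBounded U) (hUne : U.Nonempty)
    (hUsub : ∀ i, φ i '' U ⊆ U)
    (hUdisj : Pairwise (Function.onFun Disjoint (fun i => φ i '' U)))
    (A : Set (EuclideanSpace ℝ (Fin d))) (hA : IsCompact A) (hAne : A.Nonempty)
    (hfix : A = ⋃ i, φ i '' A) :
    ∃ c C : ℝ, 0 < c ∧ c ≤ C ∧ ∀ r ∈ Set.Ioo (0 : ℝ) 1,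
      c * r ^ ((d : ℝ) - s) ≤ (volume (thickening r A)).toReal ∧
      (volume (thickening r A)).toReal ≤ C * r ^ ((d : ℝ) - s) := by
  -- m is nonempty
  haveI hmne : Nonempty (Fin m) := by
    rcases Nat.eq_zero_or_pos m with h | h
    · exfalso
      subst h
      simpa using hsum
    · exact ⟨⟨0, h⟩⟩
  -- there are two distinct indices
  have htwo : ∃ i j : Fin m, i ≠ j := by
    by_contra hno
    push_neg at hno
    haveI : Subsingleton (Fin m) := ⟨hno⟩
    have hm1 : m = 1 := by
      have := Fintype.card_le_one_iff_subsingleton.mpr this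
      have h2 := Fintype.card_pos (α := Fin m)
      simp only [Fintype.card_fin] at this h2
      omega
    subst hm1
    rw [Fin.sum_univ_one] at hsum
    have := Real.rpow_lt_one (hlam 0).1.le (hlam 0).2 hs
    linarith
  -- the dimension is positive
  rcases Nat.eq_zero_or_pos d with hd0 | hd0
  · exfalso
    haveI : Subsingleton (EuclideanSpace ℝ (Fin d)) := by
      subst hd0
      rw [← Module.finrank_zero_iff (R := ℝ)]
      simp [finrank_euclideanSpace_fin]
    obtain ⟨i, j, hij⟩ := htwo
    obtain ⟨x0, hx0⟩ := hUne
    have hx : φ i x0 ∈ φ i '' U := ⟨x0, hx0, rfl⟩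
    have hy : φ j x0 ∈ φ j '' U := ⟨x0, hx0, rfl⟩
    have : φ i x0 = φ j x0 := Subsingleton.elim _ _
    exact Set.disjoint_left.mp (hUdisj hij) hx (this ▸ hy)
  haveI : Nontrivial (EuclideanSpace ℝ (Fin d)) := by
    refine Module.nontrivial_of_finrank_pos (R := ℝ) ?_
    rw [finrank_euclideanSpace_fin]
    exact hd0
  classical
  -- extremal ratios
  set t : ℝ := Finset.univ.sup' Finset.univ_nonempty lam with htdef
  set u : ℝ := Finset.univ.inf' Finset.univ_nonempty lam with hudef
  have ht : ∀ i, lam i ≤ t := fun i => Finset.le_sup' lam (Finset.mem_univ i)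
  have hu : ∀ i, u ≤ lam i := fun i => Finset.inf'_le lam (Finset.mem_univ i)
  have ht1 : t < 1 := by
    rw [htdef, Finset.sup'_lt_iff]
    exact fun i _ => (hlam i).2
  have hu0 : 0 < u := by
    rw [hudef, Finset.lt_inf'_iff]
    exact fun i _ => (hlam i).1
  have ht0 : 0 < t := lt_of_lt_of_le (hlam (Classical.arbitrary _)).1 (ht _)
  have hu1 : u < 1 := lt_of_le_of_lt (hu (Classical.arbitrary _)) (hlam _).2
  -- basic consequences
  have hinj : ∀ i, Function.Injective (φ i) := by
    intro i x y h
    have h1 := hsim i x y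
    rw [h, dist_self] at h1
    have h2 : dist x y = 0 := by
      have := (hlam i).1
      rcases mul_eq_zero.mp h1.symm with h3 | h3
      · linarith
      · exact h3
    exact dist_eq_zero.mp h2
  have hAsub_i : ∀ i, φ i '' A ⊆ A := by
    intro i
    conv_rhs => rw [hfix]
    exact Set.subset_iUnion (fun j => φ j '' A) i
  have hAcover : A ⊆ ⋃ i, φ i '' A := hfix.subset
  obtain ⟨a0, ha0⟩ := hAne
  set D : ℝ := diam A with hDdef
  have hD0 : 0 ≤ D := diam_nonneg
  have hAbd : Bornology.IsBounded A := hA.isBounded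
  have hsimW := phiW_dist (lam := lam) (ψ := φ) hsim
  have hopenW : ∀ w : List (Fin m), IsOpen (phiW φ w '' U) := fun w =>
    (sim_vol (lamP_pos hlam w) (phiW φ w) (hsimW w)).1 U hUopen
  have hvolW : ∀ w : List (Fin m),
      volume (phiW φ w '' U) = ENNReal.ofReal (lamP lam w ^ d) * volume U := fun w =>
    (sim_vol (lamP_pos hlam w) (phiW φ w) (hsimW w)).2 U hUopen.measurableSet
  -- volume constants
  set B : ENNReal := volume (ball (0 : Eu d) 1) with hBdef
  set Btr : ℝ := B.toReal with hBtrdef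
  have hBfin : B ≠ ⊤ := measure_ball_lt_top.ne
  have hBpos : 0 < Btr :=
    ENNReal.toReal_pos (measure_ball_pos volume _ one_pos).ne' hBfin
  set vU : ℝ := (volume U).toReal with hvUdef
  have hUfin : volume U ≠ ⊤ := by
    refine lt_of_le_of_lt (measure_mono subset_closure) ?_ |>.ne
    exact hUbdd.isCompact_closure.measure_lt_top
  have hvU : volume U = ENNReal.ofReal vU := (ENNReal.ofReal_toReal hUfin).symm
  have hvUpos : 0 < vU :=
    ENNReal.toReal_pos (hUopen.measure_pos volume hUne).ne' hUfin
  -- the enclosing radius of U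
  obtain ⟨R0, hR0⟩ := hUbdd.subset_closedBall a0
  set R : ℝ := max R0 1 + 1 with hRdef
  have hR2 : 2 ≤ R := by
    have : (1:ℝ) ≤ max R0 1 := le_max_right _ _
    linarith
  have hRpos : 0 < R := by linarith
  have hUR : ∀ x ∈ U, dist x a0 ≤ R - 1 := by
    intro x hx
    have := mem_closedBall.mp (hR0 hx)
    have h2 : R0 ≤ max R0 1 := le_max_left _ _
    simp only [hRdef]
    linarith
  -- finiteness of thickened set
  obtain ⟨RA, hRA⟩ := hAbd.subset_closedBall a0
  have hfin : ∀ r ∈ Set.Ioo (0:ℝ) 1, volume (thickening r A) ≠ ⊤ := by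
    intro r hr
    have hsub : thickening r A ⊆ ball a0 (RA + 1) := by
      intro x hx
      obtain ⟨a, haA, hdx⟩ := mem_thickening_iff.mp hx
      have h1 : dist a a0 ≤ RA := mem_closedBall.mp (hRA haA)
      have h2 : dist x a0 ≤ dist x a + dist a a0 := dist_triangle _ _ _
      rw [mem_ball]
      have := hr.2
      linarith
    exact ((measure_mono hsub).trans_lt measure_ball_lt_top).ne
  -- constants
  set C0 : ℝ := u ^ (-s) * (D + 1) ^ d * Btr with hC0def
  set c0 : ℝ := u ^ d * vU * R ^ (s - (d:ℝ)) with hc0def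
  have hC0pos : 0 < C0 := by
    apply mul_pos (mul_pos _ _) hBpos
    · exact Real.rpow_pos_of_pos hu0 _
    · exact pow_pos (by linarith) d
  have hc0pos : 0 < c0 := by
    apply mul_pos (mul_pos (pow_pos hu0 d) hvUpos)
    exact Real.rpow_pos_of_pos hRpos _
  -- UPPER BOUND
  have upper : ∀ r ∈ Set.Ioo (0:ℝ) 1,
      volume (thickening r A) ≤ ENNReal.ofReal (C0 * r ^ ((d:ℝ) - s)) := by
    rintro r ⟨hr0, hr1⟩
    obtain ⟨n, hn⟩ := exists_pow_lt_of_lt_one hr0 ht1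
    have hnmin : t ^ n ≤ min r 1 := le_min hn.le (pow_le_one₀ ht0.le ht1.le)
    set S := TT lam n r with hSdef
    have hbound := TT_bounds hlam ht ht0 ht1 hu hu0 hu1 n r hr0 hnmin
    have hsumS := TT_sum hlam hsum ht ht0 ht1 n r hr0 hnmin
    have hcover := TT_cover (φ := φ) hlam ht ht0 ht1 hAcover n r hr0 hnmin
    have hminr : min r 1 = r := min_eq_left hr1.le
    rw [hminr] at hbound
    -- cardinality bound
    have hcard : (S.card : ℝ) * (u * r) ^ s ≤ 1 := by
      rw [← hsumS]
      calc (S.card : ℝ) * (u * r) ^ s = ∑ _w ∈ S, (u * r) ^ s := by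
            rw [Finset.sum_const, nsmul_eq_mul]
        _ ≤ ∑ w ∈ S, lamP lam w ^ s := by
            refine Finset.sum_le_sum fun w hw => ?_
            exact Real.rpow_le_rpow (by positivity) (hbound w hw).1.le hs.le
    have hurpos : 0 < ((u * r) ^ s : ℝ) := Real.rpow_pos_of_pos (by positivity) s
    have hcard' : (S.card : ℝ) ≤ (u * r) ^ (-s) := by
      rw [Real.rpow_neg (by positivity), ← one_div]
      rw [le_div_iff₀ hurpos]
      exact hcard
    -- covering by balls
    have hsubset : thickening r A ⊆ ⋃ w ∈ S, ball (phiW φ w a0) ((D + 1) * r) := by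
      intro x hx
      obtain ⟨a, haA, hdista⟩ := mem_thickening_iff.mp hx
      have := hcover haA
      simp only [Set.mem_iUnion, Set.mem_image] at this
      obtain ⟨w, hwS, a', ha', rfl⟩ := this
      refine Set.mem_iUnion₂.mpr ⟨w, hwS, ?_⟩
      rw [mem_ball]
      have h1 : dist (phiW φ w a') (phiW φ w a0) ≤ r * D := by
        rw [hsimW w]
        have hd : dist a' a0 ≤ D := dist_le_diam_of_mem hAbd ha' ha0
        exact mul_le_mul (hbound w hwS).2 hd dist_nonneg hr0.le
      calc dist x (phiW φ w a0)
          ≤ dist x (phiW φ w a') + dist (phiW φ w a') (phiW φ w a0) := dist_triangle _ _ _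
        _ < r + r * D := by linarith
        _ = (D + 1) * r := by ring
    have hvol : volume (thickening r A)
        ≤ (S.card : ENNReal) * (ENNReal.ofReal (((D + 1) * r) ^ d) * B) := by
      refine (measure_mono hsubset).trans ?_
      refine (measure_biUnion_finset_le S _).trans ?_
      have hball : ∀ w ∈ S, volume (ball (phiW φ w a0) ((D + 1) * r))
          = ENNReal.ofReal (((D + 1) * r) ^ d) * B := by
        intro w _
        rw [Measure.addHaar_ball volume _ (by positivity), finrank_euclideanSpace_fin]
      rw [Finset.sum_congr rfl hball, Finset.sum_const, nsmul_eq_mul]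
    refine hvol.trans ?_
    have hBeq : B = ENNReal.ofReal Btr := (ENNReal.ofReal_toReal hBfin).symm
    rw [hBeq, show ((S.card : ENNReal)) = ENNReal.ofReal (S.card : ℝ) by
        rw [ENNReal.ofReal_natCast],
      ← ENNReal.ofReal_mul (p := ((D + 1) * r) ^ d) (by positivity),
      ← ENNReal.ofReal_mul (p := (S.card : ℝ)) (Nat.cast_nonneg _)]
    refine ENNReal.ofReal_le_ofReal ?_
    have h2 : (S.card : ℝ) * (((D + 1) * r) ^ d * Btr)
        ≤ (u * r) ^ (-s) * (((D + 1) * r) ^ d * Btr) :=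
      mul_le_mul_of_nonneg_right hcard' (by positivity)
    refine h2.trans_eq ?_
    rw [hC0def, Real.mul_rpow hu0.le hr0.le, mul_pow,
      show ((d:ℝ) - s) = -s + (d:ℝ) by ring, Real.rpow_add hr0,
      ← Real.rpow_natCast r d]
    ring
  -- LOWER BOUND
  have lower : ∀ r ∈ Set.Ioo (0:ℝ) 1,
      ENNReal.ofReal (c0 * r ^ ((d:ℝ) - s)) ≤ volume (thickening r A) := by
    rintro r ⟨hr0, hr1⟩
    set r' : ℝ := r / R with hr'def
    have hr'0 : 0 < r' := div_pos hr0 hRpos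
    have hr'1 : r' < 1 := by
      rw [hr'def, div_lt_one hRpos]
      linarith
    obtain ⟨n, hn⟩ := exists_pow_lt_of_lt_one hr'0 ht1
    have hnmin : t ^ n ≤ min r' 1 := le_min hn.le (pow_le_one₀ ht0.le ht1.le)
    set S := TT lam n r' with hSdef
    have hbound := TT_bounds hlam ht ht0 ht1 hu hu0 hu1 n r' hr'0 hnmin
    have hsumS := TT_sum hlam hsum ht ht0 ht1 n r' hr'0 hnmin
    have hdisjS := TT_disj (φ := φ) hlam ht ht0 ht1 hinj hUsub hUdisj n r' hr'0 hnmin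
    have hminr : min r' 1 = r' := min_eq_left hr'1.le
    rw [hminr] at hbound
    -- each piece is inside the thickening
    have hsub : ∀ w ∈ S, phiW φ w '' U ⊆ thickening r A := by
      rintro w hw x ⟨x0, hx0, rfl⟩
      rw [mem_thickening_iff]
      refine ⟨phiW φ w a0, phiW_image_subset hAsub_i w ⟨a0, ha0, rfl⟩, ?_⟩
      rw [hsimW w]
      have h1 : dist x0 a0 ≤ R - 1 := hUR x0 hx0
      have h2 : lamP lam w ≤ r' := (hbound w hw).2
      have hlp := lamP_pos hlam w
      calc lamP lam w * dist x0 a0 ≤ r' * (R - 1) :=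
            mul_le_mul h2 h1 dist_nonneg hr'0.le
        _ < r' * R := by nlinarith
        _ = r := div_mul_cancel₀ r hRpos.ne'
    -- disjoint union of pieces
    have hdisj' : (↑S : Set (List (Fin m))).PairwiseDisjoint (fun w => phiW φ w '' U) :=
      fun w1 h1 w2 h2 hne =>
        hdisjS w1 (Finset.mem_coe.mp h1) w2 (Finset.mem_coe.mp h2) hne
    have hunion : volume (⋃ w ∈ S, phiW φ w '' U) = ∑ w ∈ S, volume (phiW φ w '' U) :=
      measure_biUnion_finset hdisj' (fun w _ => (hopenW w).measurableSet)
    -- cardinality lower bound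
    have hr'spos : 0 < (r' ^ s : ℝ) := Real.rpow_pos_of_pos hr'0 s
    have hcard : r' ^ (-s) ≤ (S.card : ℝ) := by
      have h4 : (1:ℝ) ≤ (S.card : ℝ) * r' ^ s := by
        rw [← hsumS]
        calc ∑ w ∈ S, lamP lam w ^ s ≤ ∑ _w ∈ S, r' ^ s := by
              refine Finset.sum_le_sum fun w hw => ?_
              exact Real.rpow_le_rpow (lamP_pos hlam w).le (hbound w hw).2 hs.le
          _ = (S.card : ℝ) * r' ^ s := by rw [Finset.sum_const, nsmul_eq_mul]
      rw [Real.rpow_neg hr'0.le, ← one_div]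
      rw [div_le_iff₀ hr'spos]
      linarith
    -- volume lower bound
    have hterm : ∀ w ∈ S, ENNReal.ofReal ((u * r') ^ d * vU) ≤ volume (phiW φ w '' U) := by
      intro w hw
      rw [hvolW w, hvU, ← ENNReal.ofReal_mul (pow_nonneg (lamP_pos hlam w).le d)]
      refine ENNReal.ofReal_le_ofReal ?_
      refine mul_le_mul_of_nonneg_right ?_ hvUpos.le
      exact pow_le_pow_left₀ (mul_nonneg hu0.le hr'0.le) (hbound w hw).1.le d
    have hvol : ENNReal.ofReal ((S.card : ℝ) * ((u * r') ^ d * vU))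
        ≤ volume (thickening r A) := by
      have hsubU : (⋃ w ∈ S, phiW φ w '' U) ⊆ thickening r A :=
        Set.iUnion₂_subset hsub
      refine le_trans ?_ (measure_mono hsubU)
      rw [hunion]
      calc ENNReal.ofReal ((S.card : ℝ) * ((u * r') ^ d * vU))
          = ∑ _w ∈ S, ENNReal.ofReal ((u * r') ^ d * vU) := by
            rw [Finset.sum_const, nsmul_eq_mul, ← ENNReal.ofReal_natCast,
              ← ENNReal.ofReal_mul (p := (S.card : ℝ)) (Nat.cast_nonneg _)]
        _ ≤ ∑ w ∈ S, volume (phiW φ w '' U) := Finset.sum_le_sum hterm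
    refine le_trans ?_ hvol
    refine ENNReal.ofReal_le_ofReal ?_
    have h5 : r' ^ (-s) * ((u * r') ^ d * vU) = c0 * r ^ ((d:ℝ) - s) := by
      rw [hc0def, hr'def, mul_pow, div_pow, Real.div_rpow hr0.le hRpos.le,
        Real.rpow_sub hRpos, Real.rpow_sub hr0, Real.rpow_neg hr0.le, Real.rpow_neg hRpos.le,
        ← Real.rpow_natCast r d, ← Real.rpow_natCast R d]
      have n1 : (r ^ s : ℝ) ≠ 0 := (Real.rpow_pos_of_pos hr0 s).ne'
      have n2 : (R ^ s : ℝ) ≠ 0 := (Real.rpow_pos_of_pos hRpos s).ne'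
      have n3 : (r ^ (d:ℝ) : ℝ) ≠ 0 := (Real.rpow_pos_of_pos hr0 _).ne'
      have n4 : (R ^ (d:ℝ) : ℝ) ≠ 0 := (Real.rpow_pos_of_pos hRpos _).ne'
      field_simp
    rw [← h5]
    exact mul_le_mul_of_nonneg_right hcard
      (mul_nonneg (pow_nonneg (mul_nonneg hu0.le hr'0.le) d) hvUpos.le)
  -- ASSEMBLY
  refine ⟨min c0 C0, max c0 C0, lt_min hc0pos hC0pos, min_le_of_left_le (le_max_left _ _),
    fun r hr => ⟨?_, ?_⟩⟩
  · have h1 := lower r hr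
    have h2 := (ENNReal.ofReal_le_iff_le_toReal (hfin r hr)).mp h1
    have h3 : min c0 C0 * r ^ ((d:ℝ) - s) ≤ c0 * r ^ ((d:ℝ) - s) :=
      mul_le_mul_of_nonneg_right (min_le_left _ _) (Real.rpow_nonneg hr.1.le _)
    linarith
  · have h1 := upper r hr
    have h2 := ENNReal.toReal_le_of_le_ofReal (mul_nonneg hC0pos.le (Real.rpow_nonneg hr.1.le _)) h1
    have h3 : C0 * r ^ ((d:ℝ) - s) ≤ max c0 C0 * r ^ ((d:ℝ) - s) :=
      mul_le_mul_of_nonneg_right (le_max_right _ _) (Real.rpow_nonneg hr.1.le _)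
    linarith
end

section
/- Let K ⊂ ℝ^d be compact with ∂K_r = ∂K + B(0,r), ∂K_r^+ = ∂K_r ∩ K^c, ∂K_r^− = ∂K_r ∩ K, and let f_r, g_r be the local densities of K and K^c at radius r. Then the following are equivalent: (1) liminf_{r→0} (1/Vol(∂K_r)) (∫_{∂K_r^+} f_r² + ∫_{∂K_r^−} g_r²) > 0; (2) liminf_{r→0} (1/(Vol(∂K_r) κ_d r^d)) ∫_{K×K^c} 1_{|x−y| ≤ r} dx dy > 0. -/
open MeasureTheory Metric Set Filter

/-- Volume of the unit ball in `ℝ^d`. -/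
noncomputable def kappa (d : ℕ) : ℝ :=
  (volume (ball (0 : EuclideanSpace ℝ (Fin d)) 1)).toReal

/-- The local density of `K` at `x` at radius `r`. -/
noncomputable def fdens {d : ℕ} (K : Set (EuclideanSpace ℝ (Fin d))) (r : ℝ)
    (x : EuclideanSpace ℝ (Fin d)) : ℝ :=
  (volume (K ∩ ball x r)).toReal / (kappa d * r ^ d)

/-- The `r`-neighbourhood `∂K_r` of the boundary of `K`. -/
noncomputable def bdryNbhd {d : ℕ} (K : Set (EuclideanSpace ℝ (Fin d))) (r : ℝ) :
    Set (EuclideanSpace ℝ (Fin d)) :=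
  thickening r (frontier K)

open ENNReal

section helpers

variable {d : ℕ}
local notation "α" => EuclideanSpace ℝ (Fin d)

lemma helper_frontier {X : Type*} [TopologicalSpace X]
    {s t : Set X} (hs : IsPreconnected s) (h1 : (s ∩ t).Nonempty)
    (h2 : (s ∩ tᶜ).Nonempty) : (s ∩ frontier t).Nonempty := by
  by_contra h
  rw [Set.not_nonempty_iff_eq_empty] at h
  have hfr : ∀ x ∈ s, x ∉ frontier t := by
    intro x hx hxf
    exact absurd (Set.mem_inter hx hxf) (by simp [h])
  have hsub : s ⊆ interior t ∪ (closure t)ᶜ := by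
    intro x hx
    by_cases hxc : x ∈ closure t
    · left
      by_contra hxi
      exact hfr x hx ⟨hxc, hxi⟩
    · right; exact hxc
  have h1' : (s ∩ interior t).Nonempty := by
    obtain ⟨x, hxs, hxt⟩ := h1
    refine ⟨x, hxs, ?_⟩
    by_contra hxi
    exact hfr x hxs ⟨subset_closure hxt, hxi⟩
  have h2' : (s ∩ (closure t)ᶜ).Nonempty := by
    obtain ⟨x, hxs, hxt⟩ := h2
    refine ⟨x, hxs, ?_⟩
    intro hxc
    exact hfr x hxs ⟨hxc, fun hxi => hxt (interior_subset hxi)⟩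
  obtain ⟨x, -, hx1, hx2⟩ := hs _ _ isOpen_interior isClosed_closure.isOpen_compl hsub h1' h2'
  exact hx2 (subset_closure (interior_subset hx1))

-- support lemma
lemma ball_inter_empty {d : ℕ} {K : Set (EuclideanSpace ℝ (Fin d))} {r : ℝ}
    (hr : 0 < r) {x : EuclideanSpace ℝ (Fin d)} (hx : x ∈ Kᶜ) (hx' : x ∉ bdryNbhd K r) :
    K ∩ ball x r = ∅ := by
  rw [Set.eq_empty_iff_forall_notMem]
  rintro y ⟨hyK, hyb⟩
  apply hx'
  have hseg : segment ℝ x y ⊆ ball x r :=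
    (convex_ball x r).segment_subset (mem_ball_self hr) hyb
  obtain ⟨z, hz1, hz2⟩ := helper_frontier (convex_segment x y).isPreconnected
    ⟨y, right_mem_segment ℝ x y, hyK⟩ ⟨x, left_mem_segment ℝ x y, hx⟩
  rw [bdryNbhd, Metric.mem_thickening_iff]
  exact ⟨z, hz2, by simpa [dist_comm] using hseg hz1⟩

lemma ball_inter_empty' {d : ℕ} {K : Set (EuclideanSpace ℝ (Fin d))} {r : ℝ}
    (hr : 0 < r) {x : EuclideanSpace ℝ (Fin d)} (hx : x ∈ K) (hx' : x ∉ bdryNbhd K r) :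
    Kᶜ ∩ ball x r = ∅ := by
  have h := ball_inter_empty (K := Kᶜ) hr (show x ∈ Kᶜᶜ by simpa) ?_
  · simpa using h
  · simpa [bdryNbhd, frontier_compl] using hx'



lemma meas_volBall {K : Set α} (hK : MeasurableSet K) (r : ℝ) :
    Measurable (fun x : α => volume (K ∩ ball x r)) := by
  have hS : MeasurableSet {p : α × α | p.2 ∈ K ∧ dist p.2 p.1 < r} := by
    refine (hK.preimage measurable_snd).inter ?_
    exact measurableSet_lt (continuous_snd.dist continuous_fst).measurable measurable_const
  exact measurable_measure_prodMk_left (ν := volume) hS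

lemma vol_inter_closedBall_eq [Nontrivial (EuclideanSpace ℝ (Fin d))] (s : Set α) (x : α) (r : ℝ) :
    volume (s ∩ closedBall x r) = volume (s ∩ ball x r) := by
  have h0 : volume (s ∩ sphere x r) = 0 :=
    measure_mono_null Set.inter_subset_right (Measure.addHaar_sphere volume x r)
  rw [← ball_union_sphere, Set.inter_union_distrib_left]
  refine le_antisymm ?_ (measure_mono Set.subset_union_left)
  calc volume (s ∩ ball x r ∪ s ∩ sphere x r)
      ≤ volume (s ∩ ball x r) + volume (s ∩ sphere x r) := measure_union_le _ _
    _ = volume (s ∩ ball x r) := by rw [h0, add_zero]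

lemma fubini_swap {K : Set α} (hK : MeasurableSet K) (r : ℝ) :
    ∫⁻ x in K, volume (Kᶜ ∩ closedBall x r) = ∫⁻ y in Kᶜ, volume (K ∩ closedBall y r) := by
  set S : Set (α × α) := {p : α × α | p.1 ∈ K ∧ p.2 ∈ Kᶜ ∧ dist p.1 p.2 ≤ r} with hSdef
  have hS : MeasurableSet S := by
    refine (hK.preimage measurable_fst).inter ?_
    refine (hK.compl.preimage measurable_snd).inter ?_
    exact measurableSet_le (continuous_fst.dist continuous_snd).measurable measurable_const
  set W : α × α → ℝ≥0∞ := S.indicator (fun _ => 1) with hWdef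
  have hW : Measurable W := measurable_const.indicator hS
  have claim1 : ∀ x : α, ∫⁻ y, W (x, y) = K.indicator (fun x => volume (Kᶜ ∩ closedBall x r)) x := by
    intro x
    by_cases hx : x ∈ K
    · have heq : (fun y : α => W (x, y)) = (Kᶜ ∩ closedBall x r).indicator (fun _ => 1) := by
        funext y
        by_cases hy : y ∈ Kᶜ ∩ closedBall x r
        · rw [Set.indicator_of_mem hy, hWdef, Set.indicator_of_mem]
          exact ⟨hx, hy.1, by simpa [mem_closedBall, dist_comm] using hy.2⟩
        · rw [Set.indicator_of_notMem hy, hWdef, Set.indicator_of_notMem]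
          intro hmem
          exact hy ⟨hmem.2.1, by simpa [mem_closedBall, dist_comm] using hmem.2.2⟩
      rw [heq, lintegral_indicator (hK.compl.inter measurableSet_closedBall) _,
        setLIntegral_one, Set.indicator_of_mem hx]
    · have heq : (fun y : α => W (x, y)) = fun _ => 0 := by
        funext y
        rw [hWdef, Set.indicator_of_notMem]
        intro hmem; exact hx hmem.1
      rw [heq, lintegral_zero, Set.indicator_of_notMem hx]
  have claim2 : ∀ y : α, ∫⁻ x, W (x, y) = Kᶜ.indicator (fun y => volume (K ∩ closedBall y r)) y := by
    intro y
    by_cases hy : y ∈ Kᶜ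
    · have heq : (fun x : α => W (x, y)) = (K ∩ closedBall y r).indicator (fun _ => 1) := by
        funext x
        by_cases hx : x ∈ K ∩ closedBall y r
        · rw [Set.indicator_of_mem hx, hWdef, Set.indicator_of_mem]
          exact ⟨hx.1, hy, by simpa [mem_closedBall, dist_comm] using hx.2⟩
        · rw [Set.indicator_of_notMem hx, hWdef, Set.indicator_of_notMem]
          intro hmem
          exact hx ⟨hmem.1, by simpa [mem_closedBall, dist_comm] using hmem.2.2⟩
      rw [heq, lintegral_indicator (hK.inter measurableSet_closedBall) _,
        setLIntegral_one, Set.indicator_of_mem hy]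
    · have heq : (fun x : α => W (x, y)) = fun _ => 0 := by
        funext x
        rw [hWdef, Set.indicator_of_notMem]
        intro hmem; exact hy hmem.2.1
      rw [heq, lintegral_zero, Set.indicator_of_notMem hy]
  calc ∫⁻ x in K, volume (Kᶜ ∩ closedBall x r)
      = ∫⁻ x, K.indicator (fun x => volume (Kᶜ ∩ closedBall x r)) x := by
        rw [lintegral_indicator hK _]
    _ = ∫⁻ x, ∫⁻ y, W (x, y) := by
        congr 1; funext x; rw [claim1]
    _ = ∫⁻ y, ∫⁻ x, W (x, y) := by
        exact lintegral_lintegral_swap hW.aemeasurable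
    _ = ∫⁻ y, Kᶜ.indicator (fun y => volume (K ∩ closedBall y r)) y := by
        congr 1; funext y; rw [claim2]
    _ = ∫⁻ y in Kᶜ, volume (K ∩ closedBall y r) := by
        rw [lintegral_indicator hK.compl _]

set_option maxHeartbeats 1000000 in
lemma key_ineq (hd : d ≠ 0) {K : Set α} (hmeas : MeasurableSet K)
    {r : ℝ} (hr : 0 < r) (hV : 0 < (volume (bdryNbhd K r)).toReal) :
    ((1 / ((volume (bdryNbhd K r)).toReal * (kappa d * r ^ d))) *
        ∫ x in K, (∫ y in Kᶜ, (if dist x y ≤ r then (1 : ℝ) else 0))) ^ 2 ≤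
      (1 / (volume (bdryNbhd K r)).toReal) *
        ((∫ x in bdryNbhd K r ∩ Kᶜ, (fdens K r x) ^ 2) +
          ∫ x in bdryNbhd K r ∩ K, (fdens Kᶜ r x) ^ 2) ∧
    (1 / (volume (bdryNbhd K r)).toReal) *
        ((∫ x in bdryNbhd K r ∩ Kᶜ, (fdens K r x) ^ 2) +
          ∫ x in bdryNbhd K r ∩ K, (fdens Kᶜ r x) ^ 2) ≤
      2 * ((1 / ((volume (bdryNbhd K r)).toReal * (kappa d * r ^ d))) *
        ∫ x in K, (∫ y in Kᶜ, (if dist x y ≤ r then (1 : ℝ) else 0))) ∧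
    (1 / ((volume (bdryNbhd K r)).toReal * (kappa d * r ^ d))) *
        (∫ x in K, (∫ y in Kᶜ, (if dist x y ≤ r then (1 : ℝ) else 0))) ≤ 1 := by
  haveI : Nontrivial (EuclideanSpace ℝ (Fin d)) :=
    Module.nontrivial_of_finrank_pos (R := ℝ)
      (by rw [finrank_euclideanSpace_fin]; omega)
  set N := bdryNbhd K r with hN
  have hNmeas : MeasurableSet N := isOpen_thickening.measurableSet
  obtain ⟨hN0, hNtop⟩ := ENNReal.toReal_pos_iff.mp hV
  set V := (volume N).toReal with hVdef
  set c := kappa d * r ^ d with hcdef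
  have hκ : 0 < kappa d :=
    ENNReal.toReal_pos (measure_ball_pos volume _ one_pos).ne' measure_ball_lt_top.ne
  have hc : 0 < c := mul_pos hκ (pow_pos hr d)
  set cE := volume (ball (0 : α) r) with hcE
  have hballvol : ∀ x : α, volume (ball x r) = cE := by
    intro x
    rw [hcE, Measure.addHaar_ball volume x hr.le, Measure.addHaar_ball volume 0 hr.le]
  have hcE_top : cE < ⊤ := measure_ball_lt_top
  have hcE_toReal : cE.toReal = c := by
    rw [hcE, Measure.addHaar_ball volume 0 hr.le, finrank_euclideanSpace_fin,
      ENNReal.toReal_mul, ENNReal.toReal_ofReal (pow_nonneg hr.le _), hcdef, kappa, mul_comm]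
  set Lf := fun x : α => volume (K ∩ ball x r) with hLf
  set Lg := fun x : α => volume (Kᶜ ∩ ball x r) with hLg
  have hLf_meas : Measurable Lf := meas_volBall hmeas r
  have hLg_meas : Measurable Lg := meas_volBall hmeas.compl r
  have hLf_le : ∀ x, Lf x ≤ cE := fun x => (hballvol x) ▸ measure_mono Set.inter_subset_right
  have hLg_le : ∀ x, Lg x ≤ cE := fun x => (hballvol x) ▸ measure_mono Set.inter_subset_right
  -- basic J quantities
  set J2 := ∫⁻ x in N ∩ Kᶜ, (Lf x) ^ 2 with hJ2
  set J1 := ∫⁻ x in N ∩ K, (Lg x) ^ 2 with hJ1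
  have hJbound : ∀ (s : Set α) (L : α → ℝ≥0∞), (∀ x, L x ≤ cE) →
      (∫⁻ x in s, (L x) ^ 2) ≤ cE ^ 2 * volume s := by
    intro s L hL
    calc (∫⁻ x in s, (L x) ^ 2) ≤ ∫⁻ _ in s, cE ^ 2 :=
          lintegral_mono fun x => by gcongr; exact hL x
      _ = cE ^ 2 * volume s := setLIntegral_const s _
  have hJ2_top : J2 ≠ ⊤ := by
    refine ne_top_of_le_ne_top ?_ (hJbound _ _ hLf_le)
    exact (ENNReal.mul_lt_top (ENNReal.pow_lt_top hcE_top) ((measure_mono Set.inter_subset_left).trans_lt hNtop)).ne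
  have hJ1_top : J1 ≠ ⊤ := by
    refine ne_top_of_le_ne_top ?_ (hJbound _ _ hLg_le)
    exact (ENNReal.mul_lt_top (ENNReal.pow_lt_top hcE_top) ((measure_mono Set.inter_subset_left).trans_lt hNtop)).ne
  -- Bochner integral identities for the squared densities
  have hsq : ∀ (s : Set α) (L : α → ℝ≥0∞) (KK : Set α), Measurable L → (∀ x, L x ≤ cE) →
      (L = fun x => volume (KK ∩ ball x r)) →
      (∫ x in s, (fdens KK r x) ^ 2) = (∫⁻ x in s, (L x) ^ 2).toReal / c ^ 2 := by
    intro s L KK hLm hLle hLeq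
    have h1 : ∀ x, (fdens KK r x) ^ 2 = ((L x) ^ 2).toReal / c ^ 2 := by
      intro x
      rw [fdens, ← hcdef, hLeq, div_pow, ENNReal.toReal_pow]
    calc (∫ x in s, (fdens KK r x) ^ 2) = ∫ x in s, ((L x) ^ 2).toReal / c ^ 2 := by
          simp only [h1]
      _ = (∫ x in s, ((L x) ^ 2).toReal) / c ^ 2 := integral_div _ _
      _ = (∫⁻ x in s, (L x) ^ 2).toReal / c ^ 2 := by
          congr 1
          refine integral_toReal ((hLm.pow_const 2).aemeasurable.restrict) ?_
          exact ae_of_all _ fun x => lt_of_le_of_lt (by gcongr; exact hLle x)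
            (ENNReal.pow_lt_top hcE_top)
  have hA2 : (∫ x in N ∩ Kᶜ, (fdens K r x) ^ 2) = J2.toReal / c ^ 2 :=
    hsq _ _ _ hLf_meas hLf_le rfl
  have hA1 : (∫ x in N ∩ K, (fdens Kᶜ r x) ^ 2) = J1.toReal / c ^ 2 :=
    hsq _ _ _ hLg_meas hLg_le rfl
  -- inner integral of the double integral
  have hInner : ∀ x : α, (∫ y in Kᶜ, (if dist x y ≤ r then (1 : ℝ) else 0)) = (Lg x).toReal := by
    intro x
    have h1 : (fun y : α => if dist x y ≤ r then (1 : ℝ) else 0)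
        = (closedBall x r).indicator (fun _ => (1 : ℝ)) := by
      funext y
      by_cases h : dist x y ≤ r
      · rw [if_pos h, Set.indicator_of_mem (by simpa [mem_closedBall, dist_comm] using h)]
      · rw [if_neg h, Set.indicator_of_notMem (by simpa [mem_closedBall, dist_comm] using h)]
    rw [h1, setIntegral_indicator measurableSet_closedBall, setIntegral_const, measureReal_def,
      vol_inter_closedBall_eq, smul_eq_mul, mul_one]
  set TE := ∫⁻ x in K, Lg x with hTE
  have hTEfin : ∀ (s : Set α) (L : α → ℝ≥0∞), (∀ x, L x ≤ cE) → volume s < ⊤ →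
      (∫⁻ x in s, L x) < ⊤ := by
    intro s L hL hs
    calc (∫⁻ x in s, L x) ≤ ∫⁻ _ in s, cE := lintegral_mono fun x => hL x
      _ = cE * volume s := setLIntegral_const s _
      _ < ⊤ := ENNReal.mul_lt_top hcE_top hs
  have hT : (∫ x in K, ∫ y in Kᶜ, (if dist x y ≤ r then (1 : ℝ) else 0)) = TE.toReal := by
    calc (∫ x in K, ∫ y in Kᶜ, (if dist x y ≤ r then (1 : ℝ) else 0))
        = ∫ x in K, (Lg x).toReal := by simp only [hInner]
      _ = TE.toReal := by
          refine integral_toReal (hLg_meas.aemeasurable.restrict) ?_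
          exact ae_of_all _ fun x => (hLg_le x).trans_lt hcE_top
  -- support restriction
  have hres : ∀ (KK : Set α) (L : α → ℝ≥0∞), MeasurableSet KK →
      (L = fun x => volume (KKᶜ ∩ ball x r)) → (∀ x ∈ KK, x ∉ N → KKᶜ ∩ ball x r = ∅) →
      (∫⁻ x in KK, L x) = ∫⁻ x in N ∩ KK, L x := by
    intro KK L hKK hLeq hsupp
    have h1 : (∫⁻ x in KK, L x) = ∫⁻ x in KK, N.indicator L x := by
      refine setLIntegral_congr_fun hKK (fun x hx => ?_)
      by_cases hxN : x ∈ N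
      · rw [Set.indicator_of_mem hxN]
      · rw [Set.indicator_of_notMem hxN, hLeq]
        simp only [hsupp x hx hxN, measure_empty]
    rw [h1, lintegral_indicator hNmeas, Measure.restrict_restrict hNmeas]
  have hres1 : TE = ∫⁻ x in N ∩ K, Lg x := by
    refine hres K Lg hmeas rfl fun x hx hxN => ball_inter_empty' hr hx ?_
    rwa [← hN]
  have hswap : TE = ∫⁻ y in Kᶜ, Lf y := by
    have h1 : TE = ∫⁻ x in K, volume (Kᶜ ∩ closedBall x r) :=
      lintegral_congr fun x => (vol_inter_closedBall_eq _ _ _).symm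
    have h2 : (∫⁻ y in Kᶜ, volume (K ∩ closedBall y r)) = ∫⁻ y in Kᶜ, Lf y :=
      lintegral_congr fun y => vol_inter_closedBall_eq _ _ _
    rw [h1, fubini_swap hmeas r, h2]
  have hres2 : TE = ∫⁻ x in N ∩ Kᶜ, Lf x := by
    rw [hswap]
    refine hres Kᶜ Lf hmeas.compl (by simp [hLf]) fun x hx hxN => ?_
    have := ball_inter_empty hr hx (by rwa [← hN])
    simpa using this
  have hTEtop : TE < ⊤ := by
    rw [hres1]
    exact hTEfin _ _ hLg_le ((measure_mono Set.inter_subset_left).trans_lt hNtop)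
  -- E1 : J1, J2 ≤ cE * TE
  have hE1 : ∀ (s : Set α) (L : α → ℝ≥0∞), Measurable L → (∀ x, L x ≤ cE) →
      (∫⁻ x in s, (L x) ^ 2) ≤ cE * ∫⁻ x in s, L x := by
    intro s L hLm hLle
    calc (∫⁻ x in s, (L x) ^ 2) ≤ ∫⁻ x in s, cE * L x := by
          refine lintegral_mono fun x => ?_
          rw [pow_two]
          exact mul_le_mul_left (hLle x) _
      _ = cE * ∫⁻ x in s, L x := lintegral_const_mul cE hLm
  have hJ1TE : J1 ≤ cE * TE := by
    rw [hJ1, hres1]; exact hE1 _ _ hLg_meas hLg_le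
  have hJ2TE : J2 ≤ cE * TE := by
    rw [hJ2, hres2]; exact hE1 _ _ hLf_meas hLf_le
  -- Cauchy-Schwarz
  have hCS : TE ≤ J1 ^ (1/2 : ℝ) * (volume (N ∩ K)) ^ (1/2 : ℝ) := by
    have hconj : Real.HolderConjugate 2 2 := Real.HolderConjugate.two_two
    have h := ENNReal.lintegral_mul_le_Lp_mul_Lq (volume.restrict (N ∩ K)) hconj
      (hLg_meas.aemeasurable) (aemeasurable_const (b := (1 : ℝ≥0∞)))
    simp only [Pi.mul_apply, mul_one, ENNReal.one_rpow, lintegral_one,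
      Measure.restrict_apply_univ] at h
    have hR1 : (∫⁻ a in N ∩ K, Lg a ^ (2:ℝ)) = J1 := by
      rw [hJ1]; congr 1; funext a; rw [← ENNReal.rpow_natCast (Lg a) 2]; norm_num
    rw [hR1] at h
    rw [hres1]
    exact h
  -- pass to real numbers
  have hVnn : (0:ℝ) ≤ V := hV.le
  have hj1 : (0:ℝ) ≤ J1.toReal := ENNReal.toReal_nonneg
  have hj2 : (0:ℝ) ≤ J2.toReal := ENNReal.toReal_nonneg
  have ht0 : (0:ℝ) ≤ TE.toReal := ENNReal.toReal_nonneg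
  have hE1R : J1.toReal ≤ c * TE.toReal := by
    have := ENNReal.toReal_mono (ENNReal.mul_lt_top hcE_top hTEtop).ne hJ1TE
    rwa [ENNReal.toReal_mul, hcE_toReal] at this
  have hE2R : J2.toReal ≤ c * TE.toReal := by
    have := ENNReal.toReal_mono (ENNReal.mul_lt_top hcE_top hTEtop).ne hJ2TE
    rwa [ENNReal.toReal_mul, hcE_toReal] at this
  have hCSR : TE.toReal ≤ Real.sqrt J1.toReal * Real.sqrt V := by
    have hfin : J1 ^ (1/2 : ℝ) * (volume (N ∩ K)) ^ (1/2 : ℝ) ≠ ⊤ := by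
      refine ENNReal.mul_ne_top ?_ ?_
      · exact (ENNReal.rpow_lt_top_of_nonneg (by norm_num) hJ1_top).ne
      · exact (ENNReal.rpow_lt_top_of_nonneg (by norm_num)
          ((measure_mono Set.inter_subset_left).trans_lt hNtop).ne).ne
    have h1 := ENNReal.toReal_mono hfin hCS
    rw [ENNReal.toReal_mul, ← ENNReal.toReal_rpow, ← ENNReal.toReal_rpow,
      ← Real.sqrt_eq_rpow, ← Real.sqrt_eq_rpow] at h1
    refine h1.trans ?_
    refine mul_le_mul_of_nonneg_left ?_ (Real.sqrt_nonneg _)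
    refine Real.sqrt_le_sqrt ?_
    exact ENNReal.toReal_mono hNtop.ne (measure_mono Set.inter_subset_left)
  have hW1 : TE.toReal ≤ V * c := by
    have h1 : TE ≤ cE * volume N := by
      rw [hres1]
      calc (∫⁻ x in N ∩ K, Lg x) ≤ ∫⁻ _ in N ∩ K, cE := lintegral_mono fun x => hLg_le x
        _ = cE * volume (N ∩ K) := setLIntegral_const _ _
        _ ≤ cE * volume N := mul_le_mul_right (measure_mono Set.inter_subset_left) _
    have := ENNReal.toReal_mono (ENNReal.mul_lt_top hcE_top hNtop).ne h1
    rwa [ENNReal.toReal_mul, hcE_toReal, mul_comm] at this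
  -- final assembly
  rw [hA2, hA1, hT]
  have ht2 : TE.toReal ^ 2 ≤ J1.toReal * V := by
    nlinarith [mul_self_le_mul_self ht0 hCSR, Real.sq_sqrt hj1, Real.sq_sqrt hVnn,
      Real.sqrt_nonneg J1.toReal, Real.sqrt_nonneg V]
  refine ⟨?_, ?_, ?_⟩
  · have e1 : ((1 / (V * c)) * TE.toReal) ^ 2 = TE.toReal ^ 2 / (V * c) ^ 2 := by
      field_simp
    have e2 : (1 / V) * (J2.toReal / c ^ 2 + J1.toReal / c ^ 2)
        = (J2.toReal + J1.toReal) / (V * c ^ 2) := by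
      ring
    rw [e1, e2, div_le_div_iff₀ (by positivity) (by positivity)]
    nlinarith [mul_le_mul_of_nonneg_right ht2 (show (0:ℝ) ≤ V * c ^ 2 by positivity),
      mul_nonneg (mul_nonneg hj2 (sq_nonneg V)) (sq_nonneg c)]
  · have hsum : J2.toReal + J1.toReal ≤ 2 * (c * TE.toReal) := by linarith
    have e2 : (1 / V) * (J2.toReal / c ^ 2 + J1.toReal / c ^ 2)
        = (J2.toReal + J1.toReal) / (V * c ^ 2) := by
      ring
    have e3 : 2 * ((1 / (V * c)) * TE.toReal) = (2 * TE.toReal) / (V * c) := by ring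
    rw [e2, e3, div_le_div_iff₀ (by positivity) (by positivity)]
    nlinarith [mul_le_mul_of_nonneg_right hsum (show (0:ℝ) ≤ V * c by positivity)]
  · have e4 : (1 / (V * c)) * TE.toReal = TE.toReal / (V * c) := by ring
    rw [e4]
    exact (div_le_one (by positivity)).mpr hW1

lemma liminf_pos_iff_aux {l : Filter ℝ} [l.NeBot] {u w : ℝ → ℝ}
    (h : ∀ᶠ r in l, w r ^ 2 ≤ u r ∧ u r ≤ 2 * w r ∧ w r ≤ 1) :
    0 < liminf u l ↔ 0 < liminf w l := by
  have hu0 : ∀ᶠ r in l, 0 ≤ u r := h.mono fun r hr => (sq_nonneg _).trans hr.1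
  have hw0 : ∀ᶠ r in l, 0 ≤ w r := (h.and hu0).mono fun r hr => by nlinarith [hr.1.2.1, hr.2]
  have hu2 : ∀ᶠ r in l, u r ≤ 2 := h.mono fun r hr => by nlinarith [hr.2.1, hr.2.2]
  have hbu : IsBoundedUnder (· ≥ ·) l u := ⟨0, by simpa [eventually_map] using hu0⟩
  have hbw : IsBoundedUnder (· ≥ ·) l w := ⟨0, by simpa [eventually_map] using hw0⟩
  have hcu' : IsBoundedUnder (· ≤ ·) l u := ⟨2, by simpa [eventually_map] using hu2⟩
  have hcw' : IsBoundedUnder (· ≤ ·) l w :=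
    ⟨1, by simpa [eventually_map] using h.mono fun r hr => hr.2.2⟩
  have hcu : IsCoboundedUnder (· ≥ ·) l u := hcu'.isCoboundedUnder_ge
  have hcw : IsCoboundedUnder (· ≥ ·) l w := hcw'.isCoboundedUnder_ge
  constructor
  · intro hpos
    have h1 : ∀ᶠ r in l, liminf u l / 2 < u r :=
      eventually_lt_of_lt_liminf (by linarith) hbu
    have h2 : ∀ᶠ r in l, liminf u l / 4 ≤ w r :=
      (h1.and h).mono fun r ⟨h1r, h2r⟩ => by nlinarith [h2r.2.1]
    have h3 := le_liminf_of_le hcw h2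
    linarith
  · intro hpos
    have h1 : ∀ᶠ r in l, liminf w l / 2 < w r :=
      eventually_lt_of_lt_liminf (by linarith) hbw
    have h2 : ∀ᶠ r in l, (liminf w l / 2) ^ 2 ≤ u r :=
      (h1.and h).mono fun r ⟨h1r, h2r⟩ => le_trans (by nlinarith) h2r.1
    have h3 := le_liminf_of_le hcu h2
    have h4 : 0 < (liminf w l / 2) ^ 2 := by positivity
    linarith

theorem stmt_6 {d : ℕ} (K : Set (EuclideanSpace ℝ (Fin d))) (hK : IsCompact K)
    (hmeas : MeasurableSet K)
    (hpos : ∀ r : ℝ, 0 < r → 0 < (volume (bdryNbhd K r)).toReal) :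
    (0 < liminf (fun r : ℝ =>
        (1 / (volume (bdryNbhd K r)).toReal) *
          ((∫ x in bdryNbhd K r ∩ Kᶜ, (fdens K r x) ^ 2) +
            ∫ x in bdryNbhd K r ∩ K, (fdens Kᶜ r x) ^ 2)) (nhdsWithin 0 (Set.Ioi 0)))
    ↔
    (0 < liminf (fun r : ℝ =>
        (1 / ((volume (bdryNbhd K r)).toReal * (kappa d * r ^ d))) *
          ∫ x in K, (∫ y in Kᶜ, (if dist x y ≤ r then (1 : ℝ) else 0)))
        (nhdsWithin 0 (Set.Ioi 0))) := by
  rcases eq_or_ne d 0 with hd0 | hd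
  · exfalso
    subst hd0
    haveI : Subsingleton (EuclideanSpace ℝ (Fin 0)) :=
      ⟨fun a b => by ext i; exact i.elim0⟩
    have hfr : frontier K = ∅ := by
      rcases Set.eq_empty_or_nonempty K with h | ⟨x, hx⟩
      · rw [h, frontier_empty]
      · have hKuniv : K = Set.univ := Set.eq_univ_of_forall fun y => (Subsingleton.elim x y) ▸ hx
        rw [hKuniv, frontier_univ]
    have h1 := hpos 1 one_pos
    rw [bdryNbhd, hfr, thickening_empty] at h1
    simp at h1
  · refine liminf_pos_iff_aux ?_
    filter_upwards [self_mem_nhdsWithin] with r hr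
    exact key_ineq hd hmeas hr (hpos r hr)

end helpers
end

section
/- For measurable K ⊂ ℝ^d and r > 0, Vol(∂K_r^+) ≥ (1/(κ_d r^d)) ∫_{K×K^c} 1_{|x−y| ≤ r} dx dy, where ∂K_r^+ = (∂K + B(0,r)) ∩ K^c. -/
open MeasureTheory Metric Set

lemma aux_frontier {X : Type*} [TopologicalSpace X] {C s : Set X} (hC : IsPreconnected C)
    (h1 : (C ∩ s).Nonempty) (h2 : (C ∩ sᶜ).Nonempty) : (C ∩ frontier s).Nonempty := by
  by_contra h
  have hdisj : ∀ x, x ∈ C → x ∉ frontier s := by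
    intro x hx hf
    exact h ⟨x, hx, hf⟩
  have hmem : C ⊆ interior s ∪ interior sᶜ := by
    intro x hx
    have hxf := hdisj x hx
    by_cases hcl : x ∈ closure s
    · left
      by_contra hint
      exact hxf ⟨hcl, hint⟩
    · right
      rw [interior_compl]
      exact hcl
  have h1' : (C ∩ interior s).Nonempty := by
    obtain ⟨x, hxC, hxs⟩ := h1
    rcases hmem hxC with hx | hx
    · exact ⟨x, hxC, hx⟩
    · exact absurd hxs (interior_subset hx)
  have h2' : (C ∩ interior sᶜ).Nonempty := by
    obtain ⟨x, hxC, hxs⟩ := h2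
    rcases hmem hxC with hx | hx
    · exact absurd (interior_subset hx) hxs
    · exact ⟨x, hxC, hx⟩
  obtain ⟨z, _, hz1, hz2⟩ := hC (interior s) (interior sᶜ) isOpen_interior isOpen_interior
    hmem h1' h2'
  exact (interior_subset hz2) (interior_subset hz1)

lemma aux_zero {d : ℕ} (K : Set (EuclideanSpace ℝ (Fin d))) {r : ℝ} (hr : 0 < r)
    {y : EuclideanSpace ℝ (Fin d)} (hy : y ∈ Kᶜ) (hyt : y ∉ thickening r (frontier K)) :
    volume (closedBall y r ∩ K) = 0 := by
  by_contra h
  have hsphere : volume (sphere y r) = 0 :=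
    Measure.addHaar_sphere_of_ne_zero volume y hr.ne'
  have hball : volume (ball y r ∩ K) ≠ 0 := by
    intro h0
    apply h
    have : closedBall y r ∩ K ⊆ (ball y r ∩ K) ∪ sphere y r := by
      intro x ⟨hx1, hx2⟩
      rcases lt_or_eq_of_le (mem_closedBall.mp hx1) with hlt | heq
      · exact Or.inl ⟨mem_ball.mpr hlt, hx2⟩
      · exact Or.inr (mem_sphere.mpr heq)
    exact measure_mono_null this (by
      rw [measure_union_null_iff]; exact ⟨h0, hsphere⟩)
  obtain ⟨x, hx1, hx2⟩ := nonempty_of_measure_ne_zero hball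
  -- x ∈ K, dist x y < r
  have hconn : IsPreconnected (closedBall y (dist y x)) :=
    (convex_closedBall y (dist y x)).isPreconnected
  obtain ⟨z, hz1, hz2⟩ := aux_frontier hconn
    ⟨x, by rw [mem_closedBall, dist_comm], hx2⟩
    ⟨y, mem_closedBall_self dist_nonneg, hy⟩
  apply hyt
  rw [mem_thickening_iff]
  refine ⟨z, hz2, ?_⟩
  calc dist y z ≤ dist y x := by rw [dist_comm]; exact mem_closedBall.mp hz1
    _ < r := by rw [dist_comm]; exact mem_ball.mp hx1

theorem stmt_9 {d : ℕ} (K : Set (EuclideanSpace ℝ (Fin d))) (hmeas : MeasurableSet K)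
    (r : ℝ) (hr : 0 < r) :
    (∫⁻ p in K ×ˢ Kᶜ,
        (Set.indicator {q : EuclideanSpace ℝ (Fin d) × EuclideanSpace ℝ (Fin d) |
          dist q.1 q.2 ≤ r} (fun _ => (1 : ENNReal)) p))
      / (volume (ball (0 : EuclideanSpace ℝ (Fin d)) 1) * (ENNReal.ofReal r) ^ d)
    ≤ volume (thickening r (frontier K) ∩ Kᶜ) := by
  set c : ENNReal := volume (ball (0 : EuclideanSpace ℝ (Fin d)) 1) * (ENNReal.ofReal r) ^ d with hc
  set S : Set (EuclideanSpace ℝ (Fin d)) := thickening r (frontier K) ∩ Kᶜ with hS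
  have hSmeas : MeasurableSet S :=
    (isOpen_thickening.measurableSet).inter hmeas.compl
  have hfmeas : Measurable (Set.indicator {q : EuclideanSpace ℝ (Fin d) × EuclideanSpace ℝ (Fin d) | dist q.1 q.2 ≤ r}
      (fun _ => (1 : ENNReal))) := by
    apply Measurable.indicator measurable_const
    exact measurableSet_le (by fun_prop) measurable_const
  have hclosed : ∀ y : EuclideanSpace ℝ (Fin d), volume (closedBall y r) = c := by
    intro y
    rw [Measure.addHaar_closedBall volume y hr.le, hc,
      ENNReal.ofReal_pow hr.le]
    simp [mul_comm, finrank_euclideanSpace_fin]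
  -- compute the integral
  have key : (∫⁻ p in K ×ˢ Kᶜ,
      (Set.indicator {q : EuclideanSpace ℝ (Fin d) × EuclideanSpace ℝ (Fin d) | dist q.1 q.2 ≤ r} (fun _ => (1 : ENNReal)) p))
      = ∫⁻ y in Kᶜ, volume (closedBall y r ∩ K) := by
    rw [Measure.volume_eq_prod, ← Measure.prod_restrict,
      lintegral_prod_symm _ hfmeas.aemeasurable]
    congr 1
    funext y
    have : ∀ x : EuclideanSpace ℝ (Fin d), Set.indicator {q : EuclideanSpace ℝ (Fin d) × EuclideanSpace ℝ (Fin d) | dist q.1 q.2 ≤ r}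
        (fun _ => (1 : ENNReal)) (x, y)
        = Set.indicator (closedBall y r) (fun _ => (1 : ENNReal)) x := by
      intro x
      by_cases hx : dist x y ≤ r
      · rw [Set.indicator_of_mem (by simpa using hx),
          Set.indicator_of_mem (mem_closedBall.mpr hx)]
      · rw [Set.indicator_of_notMem (by simpa using hx),
          Set.indicator_of_notMem (fun hmem => hx (mem_closedBall.mp hmem))]
    simp_rw [this]
    rw [lintegral_indicator measurableSet_closedBall _, setLIntegral_one,
      Measure.restrict_apply measurableSet_closedBall]
  rw [key]
  -- bound the integral
  have hbound : (∫⁻ y in Kᶜ, volume (closedBall y r ∩ K))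
      ≤ ∫⁻ y in Kᶜ, S.indicator (fun _ => c) y := by
    apply setLIntegral_mono' hmeas.compl
    intro y hy
    by_cases hyS : y ∈ S
    · rw [Set.indicator_of_mem hyS]
      calc volume (closedBall y r ∩ K) ≤ volume (closedBall y r) :=
            measure_mono inter_subset_left
        _ = c := hclosed y
    · rw [Set.indicator_of_notMem hyS]
      have hyt : y ∉ thickening r (frontier K) := fun ht => hyS ⟨ht, hy⟩
      exact (aux_zero K hr hy hyt).le
  have hind : (∫⁻ y in Kᶜ, S.indicator (fun _ => c) y) = volume S * c := by
    rw [lintegral_indicator hSmeas _, setLIntegral_const,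
      Measure.restrict_apply hSmeas, mul_comm]
    congr 1
    rw [hS, inter_assoc, inter_self]
  refine ENNReal.div_le_of_le_mul ?_
  calc (∫⁻ y in Kᶜ, volume (closedBall y r ∩ K))
      ≤ volume S * c := hbound.trans (le_of_eq hind)
    _ = volume (thickening r (frontier K) ∩ Kᶜ) * c := rfl
end

section
/- Let χ ⊂ ℝ^d be a nonempty locally finite set and K ⊂ ℝ^d compact. Define the Voronoi approximation K_χ = ∪_{x ∈ χ∩K} {y : ∀x' ∈ χ, |y−x| ≤ |y−x'|}. If every point of the closure of ∂K_r^+ = (∂K + B(0,r)) ∩ K^c is at distance < r from χ, then K_χ ⊆ K + B(0,r). -/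
open MeasureTheory Metric Set

/-- The Voronoi approximation of `K` based on the point set `χ`:
the set of points lying in some Voronoi cell with nucleus in `χ ∩ K`. -/
def voronoiApprox {d : ℕ} (K χ : Set (EuclideanSpace ℝ (Fin d))) :
    Set (EuclideanSpace ℝ (Fin d)) :=
  {y | ∃ x ∈ χ ∩ K, ∀ x' ∈ χ, dist y x ≤ dist y x'}

/-- A segment from a point outside a closed set to a point inside it meets the frontier. -/
lemma exists_frontier_mem_segment {E : Type*} [NormedAddCommGroup E] [NormedSpace ℝ E]
    {K : Set E} (hK : IsClosed K) {a b : E} (ha : a ∉ K) (hb : b ∈ K) :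
    ∃ w ∈ segment ℝ a b, w ∈ frontier K := by
  set p : ℝ → E := fun s => a + s • (b - a) with hp
  have hpc : Continuous p := by fun_prop
  set T : Set ℝ := Icc 0 1 ∩ p ⁻¹' K with hT
  have hTc : IsClosed T := isClosed_Icc.inter (hK.preimage hpc)
  have hTne : T.Nonempty := ⟨1, ⟨zero_le_one, le_refl 1⟩, by simp [hp, hb]⟩
  have hTbdd : BddBelow T := ⟨0, fun s hs => hs.1.1⟩
  set t := sInf T with ht
  have htT : t ∈ T := hTc.csInf_mem hTne hTbdd
  refine ⟨p t, ?_, ?_⟩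
  · rw [segment_eq_image']
    exact ⟨t, htT.1, rfl⟩
  · rw [hK.frontier_eq]
    refine ⟨htT.2, fun hint => ?_⟩
    obtain ⟨δ, hδ, hball⟩ := Metric.isOpen_iff.1 (hpc.isOpen_preimage _ isOpen_interior) t hint
    set s := max 0 (t - δ / 2) with hs
    have hst : s ≤ t := max_le htT.1.1 (by linarith)
    have hsb : |s - t| < δ := by
      rw [abs_sub_lt_iff]
      constructor
      · linarith
      · have : t - δ / 2 ≤ s := le_max_right _ _
        linarith
    have hsK : p s ∈ K := interior_subset (hball (by simpa [Real.dist_eq] using hsb))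
    rcases eq_or_lt_of_le (le_max_left 0 (t - δ / 2) : (0:ℝ) ≤ s) with h0 | h0
    · exact ha (by simpa [hp] using (h0 ▸ hsK : p 0 ∈ K))
    · have hsT : s ∈ T := ⟨⟨le_of_lt h0, hst.trans htT.1.2⟩, hsK⟩
      have : t ≤ s := csInf_le hTbdd hsT
      have heq : s = t := le_antisymm hst this
      have htpos : 0 < t := heq ▸ h0
      have hmax : max 0 (t - δ / 2) < t := max_lt htpos (by linarith)
      rw [← hs, heq] at hmax
      exact lt_irrefl t hmax

theorem stmt_10 {d : ℕ} (K χ : Set (EuclideanSpace ℝ (Fin d)))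
    (hK : IsCompact K) (hχne : χ.Nonempty)
    (hχlf : ∀ s : Set (EuclideanSpace ℝ (Fin d)), Bornology.IsBounded s → (χ ∩ s).Finite)
    (r : ℝ) (hr : 0 < r)
    (hdense : ∀ x ∈ closure (thickening r (frontier K) ∩ Kᶜ), ∃ y ∈ χ, dist x y < r) :
    voronoiApprox K χ ⊆ thickening r K := by
  intro y hy
  obtain ⟨c, ⟨hcχ, hcK⟩, hmin⟩ := hy
  by_contra hyK
  have hKne : K.Nonempty := ⟨c, hcK⟩
  rw [mem_thickening_iff_infDist_lt hKne, not_lt] at hyK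
  -- the function measuring distance to K along the segment from c to y
  set f : ℝ → EuclideanSpace ℝ (Fin d) := fun t => c + t • (y - c) with hf
  have hfc : Continuous f := by fun_prop
  set g : ℝ → ℝ := fun t => infDist (f t) K with hg
  have hgc : Continuous g := (continuous_infDist_pt K).comp hfc
  have hg0 : g 0 = 0 := by simp [hg, hf, infDist_zero_of_mem hcK]
  have hg1 : r ≤ g 1 := by simpa [hg, hf] using hyK
  obtain ⟨t₀, ht₀, hgt⟩ := intermediate_value_Icc (zero_le_one) hgc.continuousOn
    (by rw [hg0]; exact ⟨hr.le, hg1⟩ : r ∈ Icc (g 0) (g 1))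
  set x₀ := f t₀ with hx₀
  have hx₀K : infDist x₀ K = r := hgt
  have hx₀notK : x₀ ∉ K := fun h => by
    rw [infDist_zero_of_mem h] at hx₀K; exact hr.ne hx₀K
  have hx₀seg : x₀ ∈ segment ℝ c y := by
    rw [segment_eq_image']; exact ⟨t₀, ht₀, rfl⟩
  have hsum : dist c x₀ + dist x₀ y = dist c y := dist_add_dist_of_mem_segment hx₀seg
  have hcx₀ : r ≤ dist x₀ c := hx₀K ▸ infDist_le_dist_of_mem hcK
  -- the nearest point z of K to x₀, and a frontier point w on [x₀, z]
  obtain ⟨z, hzK, hz⟩ := hK.exists_infDist_eq_dist hKne x₀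
  obtain ⟨w, hwseg, hwfr⟩ := exists_frontier_mem_segment hK.isClosed hx₀notK hzK
  have hwK : w ∈ K := hK.isClosed.frontier_subset hwfr
  have hxw_le : dist x₀ w ≤ dist x₀ z := by
    have := dist_add_dist_of_mem_segment hwseg
    have : dist x₀ w ≤ dist x₀ w + dist w z := le_add_of_nonneg_right dist_nonneg
    linarith [dist_add_dist_of_mem_segment hwseg, dist_nonneg (x := w) (y := z)]
  have hxw : dist x₀ w = r := le_antisymm (by rw [← hz] at hxw_le; linarith [hx₀K ▸ hxw_le])
    (hx₀K ▸ infDist_le_dist_of_mem hwK)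
  -- x₀ is in the closure of the r-thickened frontier minus K
  have hx₀cl : x₀ ∈ closure (thickening r (frontier K) ∩ Kᶜ) := by
    rw [Metric.mem_closure_iff]
    intro ε hε
    set s : ℝ := min (ε / (2 * r)) (1 / 2) with hsdef
    have hs0 : 0 < s := lt_min (by positivity) (by norm_num)
    have hs1 : s < 1 := lt_of_le_of_lt (min_le_right _ _) (by norm_num)
    have hd : dist x₀ (x₀ + s • (w - x₀)) = s * r := by
      rw [dist_self_add_right, norm_smul, Real.norm_eq_abs, abs_of_pos hs0, ← dist_eq_norm',
        hxw]
    refine ⟨x₀ + s • (w - x₀), ⟨?_, ?_⟩, ?_⟩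
    · rw [Metric.mem_thickening_iff]
      refine ⟨w, hwfr, ?_⟩
      have : x₀ + s • (w - x₀) - w = (1 - s) • (x₀ - w) := by module
      rw [dist_eq_norm, this, norm_smul, Real.norm_eq_abs,
        abs_of_pos (by linarith), ← dist_eq_norm, hxw]
      nlinarith
    · intro hmem
      have h1 : infDist x₀ K ≤ infDist (x₀ + s • (w - x₀)) K + dist x₀ (x₀ + s • (w - x₀)) :=
        infDist_le_infDist_add_dist
      rw [infDist_zero_of_mem hmem, zero_add, hx₀K, hd] at h1
      nlinarith
    · rw [hd]
      calc s * r ≤ ε / (2 * r) * r := by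
            apply mul_le_mul_of_nonneg_right (min_le_left _ _) hr.le
        _ = ε / 2 := by field_simp
        _ < ε := by linarith
  obtain ⟨y', hy'χ, hy'd⟩ := hdense x₀ hx₀cl
  have h1 : dist y c ≤ dist y y' := hmin y' hy'χ
  have h2 : dist y y' ≤ dist y x₀ + dist x₀ y' := dist_triangle _ _ _
  have h3 : dist y x₀ + dist x₀ c = dist y c := by
    rw [dist_comm y x₀, dist_comm x₀ c, dist_comm y c] at *
    linarith [hsum]
  linarith [hcx₀, hy'd]
end

section
/- Let K ⊂ ℝ^d be compact, χ locally finite and nonempty, r > 0, and K_χ the Voronoi approximation of K. If some point x ∈ ∂K satisfies d(x, χ∩K) ≥ 3r and d(x, χ∩K^c) ≤ r, then B(x,r) ∩ K_χ = ∅; consequently d_H(K, K_χ) ≥ r and d_H(∂K, ∂K_χ) ≥ r. -/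
open MeasureTheory Metric Set

theorem stmt_11 {d : ℕ} (K χ : Set (EuclideanSpace ℝ (Fin d)))
    (hK : IsCompact K) (hχne : χ.Nonempty)
    (hχlf : ∀ s : Set (EuclideanSpace ℝ (Fin d)), Bornology.IsBounded s → (χ ∩ s).Finite)
    (r : ℝ) (hr : 0 < r) (x : EuclideanSpace ℝ (Fin d)) (hx : x ∈ frontier K)
    (hfar : ∀ c ∈ χ ∩ K, 3 * r ≤ dist x c)
    (hnear : ∃ y ∈ χ ∩ Kᶜ, dist x y ≤ r) :
    ball x r ∩ voronoiApprox K χ = ∅ ∧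
      ENNReal.ofReal r ≤ EMetric.hausdorffEdist K (voronoiApprox K χ) ∧
      ENNReal.ofReal r ≤
        EMetric.hausdorffEdist (frontier K) (frontier (voronoiApprox K χ)) := by
  obtain ⟨y, ⟨hyχ, hyK⟩, hyr⟩ := hnear
  have hempty : ball x r ∩ voronoiApprox K χ = ∅ := by
    ext z
    simp only [mem_inter_iff, mem_ball, mem_empty_iff_false, iff_false, not_and]
    rintro hz ⟨c, ⟨hcχ, hcK⟩, hmin⟩
    have hzx : dist z x < r := hz
    have h1 : dist z y < 2 * r := by
      have := dist_triangle z x y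
      linarith
    have h2 : 2 * r ≤ dist z c := by
      have h3 := hfar c ⟨hcχ, hcK⟩
      have h4 := dist_triangle x z c
      have h5 : dist x z = dist z x := dist_comm x z
      linarith
    have := hmin y hyχ
    linarith
  have hxK : x ∈ K := hK.isClosed.frontier_subset hx
  have hsub : closure (voronoiApprox K χ) ⊆ (ball x r)ᶜ := by
    apply closure_minimal _ isOpen_ball.isClosed_compl
    intro w hw hwb
    have : w ∈ ball x r ∩ voronoiApprox K χ := ⟨hwb, hw⟩
    rw [hempty] at this
    exact this
  have hcl : ∀ w ∈ closure (voronoiApprox K χ), ENNReal.ofReal r ≤ edist x w := by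
    intro w hw
    have : r ≤ dist x w := by
      have := hsub hw
      simp only [mem_compl_iff, mem_ball, not_lt] at this
      rwa [dist_comm]
    rw [edist_dist]
    exact ENNReal.ofReal_le_ofReal this
  refine ⟨hempty, ?_, ?_⟩
  · calc ENNReal.ofReal r ≤ EMetric.infEdist x (voronoiApprox K χ) :=
          EMetric.le_infEdist.mpr fun w hw => hcl w (subset_closure hw)
      _ ≤ _ := EMetric.infEdist_le_hausdorffEdist_of_mem hxK
  · calc ENNReal.ofReal r ≤ EMetric.infEdist x (frontier (voronoiApprox K χ)) :=
          EMetric.le_infEdist.mpr fun w hw => hcl w (frontier_subset_closure hw)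
      _ ≤ _ := EMetric.infEdist_le_hausdorffEdist_of_mem hx
end

section
/- Let E ⊂ ℝ be the middle-thirds Cantor set, i.e. the attractor of φ₁(x) = x/3 and φ₂(x) = (2+x)/3. There exist constants 0 < c ≤ C such that for all 0 < r < 1, c·r^{1−log 2/log 3} ≤ Vol(E + B(0,r)) ≤ C·r^{1−log 2/log 3}. -/
open MeasureTheory Metric Set Classical


private lemma cantor_sub01 (E : Set ℝ) (hE : IsCompact E) (hEne : E.Nonempty)
    (hfix : E = (fun x : ℝ => x / 3) '' E ∪ (fun x : ℝ => (2 + x) / 3) '' E) :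
    E ⊆ Icc 0 1 := by
  have hbdd := hE.bddAbove
  have hbdd' := hE.bddBelow
  have hM : sSup E ≤ 1 := by
    have hmem : sSup E ∈ E := hE.sSup_mem hEne
    rcases hfix.le hmem with ⟨x, hx, hxe⟩ | ⟨x, hx, hxe⟩
    · have := le_csSup hbdd hx
      simp only at hxe; linarith
    · have := le_csSup hbdd hx
      simp only at hxe; linarith
  have hm : 0 ≤ sInf E := by
    have hmem : sInf E ∈ E := hE.sInf_mem hEne
    rcases hfix.le hmem with ⟨x, hx, hxe⟩ | ⟨x, hx, hxe⟩
    · have := csInf_le hbdd' hx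
      simp only at hxe; linarith
    · have := csInf_le hbdd' hx
      simp only at hxe; linarith
  intro x hx
  exact ⟨le_trans hm (csInf_le hbdd' hx), le_trans (le_csSup hbdd hx) hM⟩


private lemma cantor_key (E : Set ℝ) (hsub : E ⊆ Icc 0 1) (hne : E.Nonempty)
    (hbdd : BddBelow E) (hinf : sInf E ∈ E)
    (hfix : E = (fun x : ℝ => x / 3) '' E ∪ (fun x : ℝ => (2 + x) / 3) '' E) (n : ℕ) :
    ∃ S : Finset ℝ, S.card = 2 ^ n ∧ ↑S ⊆ E ∧
      (∀ x ∈ S, ∀ y ∈ S, x ≠ y → (1/3:ℝ)^n ≤ |x - y|) ∧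
      E ⊆ ⋃ t ∈ S, Icc t (t + (1/3:ℝ)^n) := by
  induction n with
  | zero =>
    refine ⟨{sInf E}, by simp, by simpa using hinf, by simp, ?_⟩
    intro x hx
    simp only [Finset.mem_singleton, mem_iUnion, exists_prop]
    refine ⟨sInf E, rfl, csInf_le hbdd hx, ?_⟩
    have h1 := (hsub hx).2
    have h0 := (hsub hinf).1
    simp only [pow_zero]
    linarith
  | succ n ih =>
    obtain ⟨S, hcard, hSE, hsep, hcov⟩ := ih
    have hinj1 : Function.Injective (fun t : ℝ => t / 3) := fun a b h => by
      simp only at h; linarith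
    have hinj2 : Function.Injective (fun t : ℝ => (2 + t) / 3) := fun a b h => by
      simp only at h; linarith
    refine ⟨S.image (fun t => t / 3) ∪ S.image (fun t => (2 + t) / 3), ?_, ?_, ?_, ?_⟩
    · have hdisj : Disjoint (S.image (fun t : ℝ => t / 3)) (S.image (fun t : ℝ => (2 + t) / 3)) := by
        rw [Finset.disjoint_left]
        rintro x hx1 hx2
        simp only [Finset.mem_image] at hx1 hx2
        obtain ⟨a, ha, rfl⟩ := hx1
        obtain ⟨b, hb, hab⟩ := hx2
        have ha1 : a ≤ 1 := (hsub (hSE ha)).2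
        have hb0 : 0 ≤ b := (hsub (hSE hb)).1
        linarith
      rw [Finset.card_union_of_disjoint hdisj, Finset.card_image_of_injective _ hinj1,
        Finset.card_image_of_injective _ hinj2, hcard]
      ring
    · intro x hx
      simp only [Finset.coe_union, Finset.coe_image, mem_union, mem_image] at hx
      have himg : (fun x : ℝ => x / 3) '' E ∪ (fun x : ℝ => (2 + x) / 3) '' E ⊆ E := hfix.ge
      rcases hx with ⟨a, ha, rfl⟩ | ⟨a, ha, rfl⟩
      · exact himg (Or.inl ⟨a, hSE ha, rfl⟩)
      · exact himg (Or.inr ⟨a, hSE ha, rfl⟩)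
    · intro x hx y hy hxy
      simp only [Finset.mem_union, Finset.mem_image] at hx hy
      have hp : (1/3:ℝ)^(n+1) ≤ 1/3 := by
        calc (1/3:ℝ)^(n+1) ≤ (1/3:ℝ)^1 := by
              apply pow_le_pow_of_le_one (by norm_num) (by norm_num) (by omega)
          _ = 1/3 := pow_one _
      rcases hx with ⟨a, ha, rfl⟩ | ⟨a, ha, rfl⟩ <;> rcases hy with ⟨b, hb, rfl⟩ | ⟨b, hb, rfl⟩
      · have hab : a ≠ b := fun h => hxy (by rw [h])
        have := hsep a ha b hb hab
        have habs : |a/3 - b/3| = |a - b| / 3 := by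
          rw [show a/3 - b/3 = (a-b)/3 from by ring, abs_div]; norm_num
        rw [habs, pow_succ]
        linarith
      · have ha1 : a ≤ 1 := (hsub (hSE ha)).2
        have hb0 : 0 ≤ b := (hsub (hSE hb)).1
        have : a/3 - (2+b)/3 ≤ -(1/3) := by linarith
        rw [abs_sub_comm, abs_of_nonneg (by linarith)]
        linarith
      · have hb1 : b ≤ 1 := (hsub (hSE hb)).2
        have ha0 : 0 ≤ a := (hsub (hSE ha)).1
        rw [abs_of_nonneg (by linarith)]
        linarith
      · have hab : a ≠ b := fun h => hxy (by rw [h])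
        have := hsep a ha b hb hab
        have habs : |(2+a)/3 - (2+b)/3| = |a - b| / 3 := by
          rw [show (2+a)/3 - (2+b)/3 = (a-b)/3 from by ring, abs_div]; norm_num
        rw [habs, pow_succ]
        linarith
    · intro x hx
      rcases hfix.le hx with ⟨a, ha, rfl⟩ | ⟨a, ha, rfl⟩
      · obtain ⟨t, ht, hta⟩ := by
          have := hcov ha
          simpa only [mem_iUnion, exists_prop] using this
        simp only [mem_iUnion, exists_prop, Finset.mem_union, Finset.mem_image]
        refine ⟨t/3, Or.inl ⟨t, ht, rfl⟩, ?_, ?_⟩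
        · linarith [hta.1]
        · simp only [pow_succ]
          have := hta.2
          linarith
      · obtain ⟨t, ht, hta⟩ := by
          have := hcov ha
          simpa only [mem_iUnion, exists_prop] using this
        simp only [mem_iUnion, exists_prop, Finset.mem_union, Finset.mem_image]
        refine ⟨(2+t)/3, Or.inr ⟨t, ht, rfl⟩, ?_, ?_⟩
        · linarith [hta.1]
        · simp only [pow_succ]
          have := hta.2
          linarith


private lemma cantor_rpow (k : ℕ) :
    ((1/3:ℝ)^k) ^ (1 - Real.log 2 / Real.log 3) = (2/3:ℝ)^k := by
  have hlog3 : (0:ℝ) < Real.log 3 := Real.log_pos (by norm_num)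
  set s : ℝ := Real.log 2 / Real.log 3 with hs
  have hbase : (1/3:ℝ) ^ (1 - s) = 2/3 := by
    rw [Real.rpow_def_of_pos (by norm_num : (0:ℝ) < 1/3)]
    have hl : Real.log (1/3) = -Real.log 3 := by
      rw [one_div, Real.log_inv]
    rw [hl]
    have : -Real.log 3 * (1 - s) = Real.log 2 - Real.log 3 := by
      rw [hs]; field_simp; ring
    rw [this, Real.exp_sub, Real.exp_log (by norm_num : (0:ℝ) < 2),
      Real.exp_log (by norm_num : (0:ℝ) < 3)]
  rw [← Real.rpow_natCast (1/3:ℝ) k, ← Real.rpow_natCast (2/3:ℝ) k,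
    ← Real.rpow_mul (by norm_num : (0:ℝ) ≤ 1/3), mul_comm,
    Real.rpow_mul (by norm_num : (0:ℝ) ≤ 1/3), hbase]

theorem stmt_17 (E : Set ℝ) (hE : IsCompact E) (hEne : E.Nonempty)
    (hfix : E = (fun x : ℝ => x / 3) '' E ∪ (fun x : ℝ => (2 + x) / 3) '' E) :
    ∃ c C : ℝ, 0 < c ∧ c ≤ C ∧ ∀ r ∈ Set.Ioo (0 : ℝ) 1,
      c * r ^ (1 - Real.log 2 / Real.log 3) ≤ (volume (thickening r E)).toReal ∧
      (volume (thickening r E)).toReal ≤ C * r ^ (1 - Real.log 2 / Real.log 3) := by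
  have hsub01 : E ⊆ Icc 0 1 := cantor_sub01 E hE hEne hfix
  have hkey := cantor_key E hsub01 hEne hE.bddBelow (hE.sInf_mem hEne) hfix
  have hrpow := cantor_rpow
  set s : ℝ := Real.log 2 / Real.log 3 with hs
  have hlog3 : (0:ℝ) < Real.log 3 := Real.log_pos (by norm_num)
  have hs1 : 0 < 1 - s := by
    have : s < 1 := (div_lt_one hlog3).2 (Real.log_lt_log (by norm_num) (by norm_num))
    linarith
  refine ⟨2/3, 9/2, by norm_num, by norm_num, ?_⟩
  rintro r ⟨hr0, hr1⟩
  -- choose m with (1/3)^(m+1) ≤ r < (1/3)^m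
  obtain ⟨k0, hk0⟩ := exists_pow_lt_of_lt_one hr0 (by norm_num : (1/3:ℝ) < 1)
  have hex : ∃ k, (1/3:ℝ)^k ≤ r := ⟨k0, hk0.le⟩
  have hNspec : (1/3:ℝ)^(Nat.find hex) ≤ r := Nat.find_spec hex
  have hNpos : Nat.find hex ≠ 0 := by
    intro h
    rw [h, pow_zero] at hNspec
    linarith
  obtain ⟨m, hmN⟩ : ∃ m, Nat.find hex = m + 1 :=
    ⟨Nat.find hex - 1, (Nat.succ_pred_eq_of_pos (Nat.pos_of_ne_zero hNpos)).symm⟩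
  have hm1 : (1/3:ℝ)^(m+1) ≤ r := by rw [← hmN]; exact hNspec
  have hm2 : r < (1/3:ℝ)^m := by
    by_contra h
    exact Nat.find_min hex (by omega : m < Nat.find hex) (not_lt.1 h)
  obtain ⟨S, hcard, hSE, hsep, hcov⟩ := hkey m
  have hppos : (0:ℝ) < (1/3:ℝ)^m := by positivity
  have hppos1 : (0:ℝ) < (1/3:ℝ)^(m+1) := by positivity
  set μ := volume (thickening r E) with hμ
  -- rpow comparisons
  have hrle : r ^ (1-s) ≤ (2/3:ℝ)^m := by
    rw [← hrpow m]
    exact Real.rpow_le_rpow hr0.le hm2.le hs1.le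
  have hrge : (2/3:ℝ)^(m+1) ≤ r ^ (1-s) := by
    rw [← hrpow (m+1)]
    exact Real.rpow_le_rpow hppos1.le hm1 hs1.le
  have h23 : (2:ℝ)^m * (1/3:ℝ)^m = (2/3:ℝ)^m := by
    rw [← mul_pow]; norm_num
  have h23' : (2:ℝ)^m * (2 * (1/3:ℝ)^(m+1)) = (2/3:ℝ)^(m+1) := by
    rw [show (2:ℝ)^m * (2 * (1/3:ℝ)^(m+1)) = (2:ℝ)^(m+1) * (1/3:ℝ)^(m+1) from by
      rw [pow_succ]; ring, ← mul_pow]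
    norm_num
  -- upper bound
  have hupper : μ ≤ ENNReal.ofReal ((9/2) * r ^ (1-s)) := by
    have hsub : thickening r E ⊆ ⋃ t ∈ S, Ioo (t - r) (t + (1/3:ℝ)^m + r) := by
      intro x hx
      rw [mem_thickening_iff] at hx
      obtain ⟨y, hyE, hxy⟩ := hx
      have := hcov hyE
      simp only [mem_iUnion, exists_prop] at this ⊢
      obtain ⟨t, ht, hty⟩ := this
      rw [Real.dist_eq] at hxy
      have habs := abs_lt.1 hxy
      exact ⟨t, ht, by constructor <;> [linarith [hty.1]; linarith [hty.2]]⟩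
    calc μ ≤ volume (⋃ t ∈ S, Ioo (t - r) (t + (1/3:ℝ)^m + r)) := measure_mono hsub
      _ ≤ ∑ t ∈ S, volume (Ioo (t - r) (t + (1/3:ℝ)^m + r)) := measure_biUnion_finset_le S _
      _ = ∑ t ∈ S, ENNReal.ofReal ((1/3:ℝ)^m + 2*r) := by
          refine Finset.sum_congr rfl fun t _ => ?_
          rw [Real.volume_Ioo]
          congr 1; ring
      _ = (2^m : ℕ) • ENNReal.ofReal ((1/3:ℝ)^m + 2*r) := by rw [Finset.sum_const, hcard]
      _ = ENNReal.ofReal ((2:ℝ)^m * ((1/3:ℝ)^m + 2*r)) := by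
          rw [nsmul_eq_mul, ENNReal.ofReal_mul (by positivity : (0:ℝ) ≤ (2:ℝ)^m)]
          congr 1
          rw [ENNReal.ofReal_pow (by norm_num : (0:ℝ) ≤ 2)]
          norm_num
      _ ≤ ENNReal.ofReal ((9/2) * r ^ (1-s)) := by
          apply ENNReal.ofReal_le_ofReal
          have e1 : (2:ℝ)^m * ((1/3:ℝ)^m + 2*r) ≤ (2:ℝ)^m * (3 * (1/3:ℝ)^m) := by
            apply mul_le_mul_of_nonneg_left _ (by positivity)
            linarith
          have e2 : (2:ℝ)^m * (3 * (1/3:ℝ)^m) = (9/2) * (2/3:ℝ)^(m+1) := by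
            rw [pow_succ]
            nlinarith [h23]
          linarith [mul_le_mul_of_nonneg_left hrge (by norm_num : (0:ℝ) ≤ 9/2)]
  have hμtop : μ ≠ ⊤ := ne_top_of_le_ne_top ENNReal.ofReal_ne_top hupper
  -- lower bound
  have hlower : ENNReal.ofReal ((2/3) * r ^ (1-s)) ≤ μ := by
    have hsub : (⋃ t ∈ S, ball t ((1/3:ℝ)^(m+1))) ⊆ thickening r E := by
      refine iUnion₂_subset fun t ht => ?_
      exact (ball_subset_ball hm1).trans (ball_subset_thickening (hSE ht) r)
    have hdisj : (↑S : Set ℝ).PairwiseDisjoint (fun t => ball t ((1/3:ℝ)^(m+1))) := by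
      intro x hx y hy hxy
      apply ball_disjoint_ball
      rw [Real.dist_eq]
      have := hsep x hx y hy hxy
      have : (1/3:ℝ)^(m+1) = (1/3:ℝ)^m * (1/3) := pow_succ _ _
      linarith [hsep x hx y hy hxy]
    calc ENNReal.ofReal ((2/3) * r ^ (1-s)) ≤ ENNReal.ofReal ((2:ℝ)^m * (2 * (1/3:ℝ)^(m+1))) := by
          apply ENNReal.ofReal_le_ofReal
          rw [h23']
          have := mul_le_mul_of_nonneg_left hrle (by norm_num : (0:ℝ) ≤ 2/3)
          calc (2/3) * r ^ (1-s) ≤ (2/3) * (2/3:ℝ)^m := this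
            _ = (2/3:ℝ)^(m+1) := by rw [pow_succ]; ring
      _ = volume (⋃ t ∈ S, ball t ((1/3:ℝ)^(m+1))) := by
          rw [measure_biUnion_finset hdisj (fun t _ => measurableSet_ball)]
          rw [Finset.sum_congr rfl fun t _ => Real.volume_ball t _, Finset.sum_const, hcard]
          rw [nsmul_eq_mul, ENNReal.ofReal_mul (by positivity : (0:ℝ) ≤ (2:ℝ)^m)]
          congr 1
          rw [ENNReal.ofReal_pow (by norm_num : (0:ℝ) ≤ 2)]
          norm_num
      _ ≤ μ := measure_mono hsub
  constructor
  · exact (ENNReal.ofReal_le_iff_le_toReal hμtop).1 hlower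
  · exact ENNReal.toReal_le_of_le_ofReal (by positivity) hupper
end
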